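/- arXiv:math/0010237 — 3 statements merged into one kernel-verified Lean document; each statement's English description precedes it below -/
import Mathlib

section
/- Let P ⊆ ℝ^d be a convex polytope, α a vertex of P, and L a linear functional that is not constant on any edge of P. Let e and f be edges of P incident to α such that L increases along e and along f going away from α. Then there exist 2-dimensional faces h_1, …, h_k of P, all containing α, and edges g_0 = e, g_1, …, g_k = f of P incident to α, such that for each 1 ≤ i ≤ k the face h_i contains both edges g_{i−1} and g_i, and L increases along each g_i going away from α (i.e. all these faces lie on the L-positive side of α). -/
open Finset

section Argmax

open scoped Classical

variable {E : Type*} [AddCommGroup E] [Module ℝ E]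

/-- argmax of a linear functional over a finset -/
noncomputable def amax (f : E →ₗ[ℝ] ℝ) (A : Finset E) : Finset E :=
  A.filter fun w => ∀ v ∈ A, f v ≤ f w

lemma amax_subset (f : E →ₗ[ℝ] ℝ) (A : Finset E) : amax f A ⊆ A :=
  Finset.filter_subset _ _

lemma mem_amax {f : E →ₗ[ℝ] ℝ} {A : Finset E} {w : E} :
    w ∈ amax f A ↔ w ∈ A ∧ ∀ v ∈ A, f v ≤ f w := Finset.mem_filter

lemma amax_nonempty (f : E →ₗ[ℝ] ℝ) {A : Finset E} (hA : A.Nonempty) :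
    (amax f A).Nonempty := by
  obtain ⟨b, hb, hmax⟩ := A.exists_max_image f hA
  exact ⟨b, mem_amax.2 ⟨hb, hmax⟩⟩

lemma amax_const_on {f : E →ₗ[ℝ] ℝ} {A : Finset E} {u v : E}
    (hu : u ∈ amax f A) (hv : v ∈ amax f A) : f u = f v :=
  le_antisymm ((mem_amax.1 hv).2 u (amax_subset f A hu))
    ((mem_amax.1 hu).2 v (amax_subset f A hv))

/-- Perturbation lemma: for small `ε > 0`, `argmax (f + ε g) = argmax g (argmax f)`. -/
lemma amax_perturb (f g : E →ₗ[ℝ] ℝ) {A : Finset E} (hA : A.Nonempty) :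
    ∃ ε : ℝ, 0 < ε ∧ amax (f + ε • g) A = amax g (amax f A) := by
  set B := amax f A with hB
  have hBne : B.Nonempty := amax_nonempty f hA
  obtain ⟨b₀, hb₀⟩ := hBne
  have hb₀A : b₀ ∈ A := amax_subset f A hb₀
  -- the gap δ
  by_cases hall : A ⊆ B
  · -- f is constant-max on all of A, so B = A and any ε works
    have hBA : B = A := Finset.Subset.antisymm (amax_subset f A) hall
    refine ⟨1, one_pos, ?_⟩
    ext w
    simp only [mem_amax, hBA]
    constructor
    · rintro ⟨hw, hmax⟩
      refine ⟨hw, fun v hv => ?_⟩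
      have h1 := hmax v hv
      have h2 : f v = f w := amax_const_on (hall hv) (hall hw)
      simp only [LinearMap.add_apply, LinearMap.smul_apply, smul_eq_mul, one_mul] at h1
      linarith
    · rintro ⟨hw, hmax⟩
      refine ⟨hw, fun v hv => ?_⟩
      have h1 := hmax v hv
      have h2 : f v = f w := amax_const_on (hall hv) (hall hw)
      simp only [LinearMap.add_apply, LinearMap.smul_apply, smul_eq_mul, one_mul]
      linarith
  · obtain ⟨a₀, ha₀A, ha₀B⟩ := Finset.not_subset.1 hall
    have hCne : (A \ B).Nonempty := ⟨a₀, Finset.mem_sdiff.2 ⟨ha₀A, ha₀B⟩⟩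
    obtain ⟨c₀, hc₀, hc₀min⟩ := (A \ B).exists_min_image (fun w => f b₀ - f w) hCne
    set δ := f b₀ - f c₀ with hδ
    have hδpos : 0 < δ := by
      have hc₀A : c₀ ∈ A := (Finset.mem_sdiff.1 hc₀).1
      have hc₀B : c₀ ∉ B := (Finset.mem_sdiff.1 hc₀).2
      have hle : f c₀ ≤ f b₀ := (mem_amax.1 hb₀).2 c₀ hc₀A
      rcases lt_or_eq_of_le hle with h | h
      · simpa [hδ] using h
      · exact absurd (mem_amax.2 ⟨hc₀A, fun v hv => h ▸ (mem_amax.1 hb₀).2 v hv⟩) hc₀B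
    -- bound on g's oscillation
    obtain ⟨gM, hgM, hgMmax⟩ := A.exists_max_image g hA
    obtain ⟨gm, hgm, hgmmin⟩ := A.exists_min_image g hA
    set K := g gM - g gm with hK
    have hKnn : 0 ≤ K := by
      have := hgMmax gm hgm
      simp [hK]; linarith
    refine ⟨δ / (2 * (K + 1)), by positivity, ?_⟩
    set ε := δ / (2 * (K + 1)) with hε
    have hεpos : 0 < ε := by positivity
    have hεK : ε * K < δ := by
      rw [hε]
      rw [div_mul_eq_mul_div, div_lt_iff₀ (by positivity)]
      nlinarith
    have key : ∀ w ∈ A, w ∉ B → ∀ b ∈ B, g b ≥ g gm →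
        (f + ε • g) w < (f + ε • g) b := by
      intro w hwA hwB b hbB _
      have h1 : f b₀ - f w ≥ δ := hc₀min w (Finset.mem_sdiff.2 ⟨hwA, hwB⟩)
      have hfb : f b = f b₀ := amax_const_on hbB hb₀
      have hgw : g w ≤ g gM := hgMmax w hwA
      have hgb : g gm ≤ g b := hgmmin b (amax_subset f A hbB)
      simp only [LinearMap.add_apply, LinearMap.smul_apply, smul_eq_mul]
      have : g w - g b ≤ K := by simp [hK]; linarith
      nlinarith
    ext w
    simp only [mem_amax]
    constructor
    · rintro ⟨hwA, hmax⟩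
      obtain ⟨b₁, hb₁⟩ := amax_nonempty g (amax_nonempty f hA)
      have hb₁B : b₁ ∈ B := amax_subset g B hb₁
      have hb₁A : b₁ ∈ A := amax_subset f A hb₁B
      have hwB : w ∈ B := by
        by_contra hwB
        exact absurd (hmax b₁ hb₁A)
          (not_le.2 (key w hwA hwB b₁ hb₁B (hgmmin b₁ hb₁A)))
      refine ⟨hwB, fun v hv => ?_⟩
      have := hmax v (amax_subset f A hv)
      have hfv : f v = f w := amax_const_on hv hwB
      simp only [LinearMap.add_apply, LinearMap.smul_apply, smul_eq_mul] at this
      nlinarith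
    · rintro ⟨hwB, hmax⟩
      have hwA : w ∈ A := amax_subset f A hwB
      refine ⟨hwA, fun v hv => ?_⟩
      by_cases hvB : v ∈ B
      · have hfv : f v = f w := amax_const_on hvB hwB
        have := hmax v hvB
        simp only [LinearMap.add_apply, LinearMap.smul_apply, smul_eq_mul]
        nlinarith
      · exact le_of_lt (key v hv hvB w hwB (hgmmin w hwA))

end Argmax

section Tilt

open scoped Classical

variable {E : Type*} [AddCommGroup E] [Module ℝ E]

/-- Tilt lemma: tilt a strict separator `ρ` of `x` in `A` towards `N₁` until first contact. -/
lemma tilt_lemma (A : Finset E) (x : E) (hx : x ∈ A) (ρ N₁ : E →ₗ[ℝ] ℝ)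
    (hρ : ∀ w ∈ A, w ≠ x → ρ w < ρ x)
    (hD : ∃ w ∈ A, N₁ x < N₁ w) :
    ∃ σ : E →ₗ[ℝ] ℝ, x ∈ amax σ A ∧
      (∀ w ∈ amax σ A, w ≠ x → N₁ x < N₁ w) ∧
      (∃ w ∈ amax σ A, N₁ x < N₁ w) := by
  set D := A.filter (fun w => N₁ x < N₁ w) with hDdef
  have hDne : D.Nonempty := by
    obtain ⟨w, hw, hw2⟩ := hD
    exact ⟨w, Finset.mem_filter.2 ⟨hw, hw2⟩⟩
  obtain ⟨w₀, hw₀, hw₀min⟩ := D.exists_min_image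
    (fun w => (ρ x - ρ w) / (N₁ w - N₁ x)) hDne
  have hw₀A : w₀ ∈ A := (Finset.mem_filter.1 hw₀).1
  have hw₀N : N₁ x < N₁ w₀ := (Finset.mem_filter.1 hw₀).2
  have hw₀x : w₀ ≠ x := by rintro rfl; exact lt_irrefl _ hw₀N
  set t := (ρ x - ρ w₀) / (N₁ w₀ - N₁ x) with ht
  have htpos : 0 < t := div_pos (by linarith [hρ w₀ hw₀A hw₀x]) (by linarith)
  refine ⟨ρ + t • N₁, ?_, ?_, ?_⟩
  · -- x is a maximizer of σ on A
    refine mem_amax.2 ⟨hx, fun v hv => ?_⟩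
    by_cases hvx : v = x
    · subst hvx; exact le_refl _
    · simp only [LinearMap.add_apply, LinearMap.smul_apply, smul_eq_mul]
      by_cases hvD : v ∈ D
      · have hvN : N₁ x < N₁ v := (Finset.mem_filter.1 hvD).2
        have hmin := hw₀min v hvD
        have hv2 : t ≤ (ρ x - ρ v) / (N₁ v - N₁ x) := hmin
        have := (le_div_iff₀ (by linarith : (0:ℝ) < N₁ v - N₁ x)).1 hv2
        nlinarith
      · have hvN : ¬ N₁ x < N₁ v := by
          intro h; exact hvD (Finset.mem_filter.2 ⟨hv, h⟩)
        push_neg at hvN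
        have := hρ v hv hvx
        nlinarith
  · intro w hw hwx
    by_contra hcon
    push_neg at hcon
    have hwA : w ∈ A := amax_subset _ A hw
    have hxmax : (ρ + t • N₁) x ≤ (ρ + t • N₁) w := (mem_amax.1 hw).2 x hx
    have := hρ w hwA hwx
    simp only [LinearMap.add_apply, LinearMap.smul_apply, smul_eq_mul] at hxmax
    nlinarith
  · refine ⟨w₀, ?_, hw₀N⟩
    refine mem_amax.2 ⟨hw₀A, fun v hv => ?_⟩
    have hσeq : (ρ + t • N₁) w₀ = (ρ + t • N₁) x := by
      simp only [LinearMap.add_apply, LinearMap.smul_apply, smul_eq_mul]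
      have hne : N₁ w₀ - N₁ x ≠ 0 := by linarith
      field_simp [ht]
      have h3 : t * (N₁ w₀ - N₁ x) = ρ x - ρ w₀ := by rw [ht]; exact div_mul_cancel₀ _ hne
      linear_combination h3
    by_cases hvx : v = x
    · subst hvx; rw [hσeq]
    · rw [hσeq]
      simp only [LinearMap.add_apply, LinearMap.smul_apply, smul_eq_mul]
      by_cases hvD : v ∈ D
      · have hvN : N₁ x < N₁ v := (Finset.mem_filter.1 hvD).2
        have hv2 : t ≤ (ρ x - ρ v) / (N₁ v - N₁ x) := hw₀min v hvD
        have := (le_div_iff₀ (by linarith : (0:ℝ) < N₁ v - N₁ x)).1 hv2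
        nlinarith
      · have hvN : ¬ N₁ x < N₁ v := by
          intro h; exact hvD (Finset.mem_filter.2 ⟨hv, h⟩)
        push_neg at hvN
        have := hρ v hv hvx
        nlinarith

/-- a dual functional at a nonzero vector -/
lemma exists_dual_one {u : E} (hu : u ≠ 0) : ∃ ψ : E →ₗ[ℝ] ℝ, ψ u = 1 := by
  have h := (Module.forall_dual_apply_eq_zero_iff ℝ u).not.2 hu
  push_neg at h
  obtain ⟨φ, hφ⟩ := h
  exact ⟨(φ u)⁻¹ • φ, by simp [inv_mul_cancel₀ hφ]⟩

/-- a dual functional separating two linearly independent directions -/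
lemma exists_dual_pair {u₁ u₂ : E} (h : ∀ a b : ℝ, a • u₁ + b • u₂ = 0 → a = 0 ∧ b = 0) :
    ∃ ψ : E →ₗ[ℝ] ℝ, ψ u₁ = 1 ∧ ψ u₂ = 0 := by
  have hu₁K : u₁ ∉ Submodule.span ℝ ({u₂} : Set E) := by
    intro hmem
    obtain ⟨c, hc⟩ := Submodule.mem_span_singleton.1 hmem
    have := h 1 (-c) (by rw [← hc]; simp)
    exact one_ne_zero this.1
  set K := Submodule.span ℝ ({u₂} : Set E) with hK
  have hq : K.mkQ u₁ ≠ 0 := by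
    rw [Submodule.mkQ_apply, Ne, Submodule.Quotient.mk_eq_zero]
    exact hu₁K
  obtain ⟨φ, hφ⟩ := exists_dual_one hq
  refine ⟨φ ∘ₗ K.mkQ, by simpa using hφ, ?_⟩
  have : K.mkQ u₂ = 0 := by
    rw [Submodule.mkQ_apply, Submodule.Quotient.mk_eq_zero]
    exact Submodule.mem_span_singleton_self u₂
  simp [this]

end Tilt

section Walk

open scoped Classical

variable {E : Type*} [AddCommGroup E] [Module ℝ E]

/-- `x` is an exposed vertex of the finite point set `W`. -/
def isVert (W : Finset E) (x : E) : Prop :=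
  x ∈ W ∧ ∃ mx : E →ₗ[ℝ] ℝ, ∀ w ∈ W, w ≠ x → mx w < mx x

/-- `[u,v]` is an exposed edge of the finite point set `W`. -/
def wedge (W : Finset E) (u v : E) : Prop :=
  u ≠ v ∧ ∃ m : E →ₗ[ℝ] ℝ, u ∈ amax m W ∧ v ∈ amax m W ∧
    (amax m W : Set E) ⊆ segment ℝ u v

lemma wedge_symm {W : Finset E} {u v : E} (h : wedge W u v) : wedge W v u := by
  obtain ⟨hne, m, hu, hv, hseg⟩ := h
  exact ⟨hne.symm, m, hv, hu, by rwa [segment_symm]⟩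

lemma isVert_of_amax_singleton {W : Finset E} {m : E →ₗ[ℝ] ℝ} {x : E}
    (h : amax m W = {x}) : isVert W x := by
  have hxW : x ∈ W := amax_subset m W (h ▸ Finset.mem_singleton_self x)
  refine ⟨hxW, m, fun w hw hwx => ?_⟩
  have hxmax : ∀ v ∈ W, m v ≤ m x :=
    (mem_amax.1 (h ▸ Finset.mem_singleton_self x)).2
  have hwnot : w ∉ amax m W := by rw [h]; simpa using hwx
  rcases lt_or_eq_of_le (hxmax w hw) with h' | h'
  · exact h'
  · exact absurd (mem_amax.2 ⟨hw, fun v hv => h' ▸ hxmax v hv⟩) hwnot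

/-- Shrink an exposed subset containing the vertex `x` down to (a subset of) a segment
with endpoint `x`, staying inside the original subset. -/
lemma shrink_to_segment (W : Finset E) (x : E) (mx : E →ₗ[ℝ] ℝ)
    (hmx : ∀ w ∈ W, w ≠ x → mx w < mx x) :
    ∀ (n : ℕ) (m : E →ₗ[ℝ] ℝ), (amax m W).card ≤ n → x ∈ amax m W →
    2 ≤ (amax m W).card →
    ∃ (m' : E →ₗ[ℝ] ℝ) (w' : E), w' ≠ x ∧ x ∈ amax m' W ∧ w' ∈ amax m' W ∧
      amax m' W ⊆ amax m W ∧ (amax m' W : Set E) ⊆ segment ℝ x w' := by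
  intro n
  induction n with
  | zero => intro m hcard hx h2; omega
  | succ n ih =>
    intro m hcard hx h2
    set A := amax m W with hAdef
    have hAsubW : A ⊆ W := amax_subset m W
    obtain ⟨w₁, hw₁A, hw₁x⟩ := Finset.exists_mem_ne (s := A) (by omega) x
    set u : E := w₁ - x with hu
    have hune : u ≠ 0 := sub_ne_zero.2 hw₁x
    have hw₁eq : w₁ = x + u := by rw [hu]; abel
    by_cases hline : ∀ w ∈ A, ∃ t : ℝ, w - x = t • u
    · -- collinear case: A sits on a ray from x; take the far endpoint
      obtain ⟨ψ, hψ⟩ := exists_dual_one hune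
      have hcoef : ∀ w ∈ A, w = x + (ψ (w - x)) • u := by
        intro w hw
        obtain ⟨t, htw⟩ := hline w hw
        have : ψ (w - x) = t := by rw [htw, map_smul, hψ, smul_eq_mul, mul_one]
        rw [this, ← htw]; abel
      have hnonneg : ∀ w ∈ A, 0 ≤ ψ (w - x) := by
        intro w₂ hw₂A
        by_contra hneg
        push_neg at hneg
        set t₂ := ψ (w₂ - x) with ht₂
        have hw₂eq : w₂ = x + t₂ • u := hcoef w₂ hw₂A
        have hw₂x : w₂ ≠ x := by
          intro h
          rw [h] at ht₂; simp at ht₂; rw [ht₂] at hneg; exact lt_irrefl _ hneg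
        have hkey : (1 - t₂) • x = w₂ - t₂ • w₁ := by
          rw [hw₂eq, hw₁eq, smul_add, sub_smul, one_smul]; abel
        have hmxkey : (1 - t₂) * mx x = mx w₂ - t₂ * mx w₁ := by
          have := congrArg mx hkey
          simpa [map_smul, map_sub, smul_eq_mul] using this
        have h1 : mx w₂ < mx x := hmx w₂ (hAsubW hw₂A) hw₂x
        have h2' : mx w₁ < mx x := hmx w₁ (hAsubW hw₁A) hw₁x
        nlinarith [mul_pos (neg_pos.2 hneg) (sub_pos.2 h2')]
      obtain ⟨w', hw'A, hw'max⟩ := A.exists_max_image (fun w => ψ w) ⟨x, hx⟩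
      set T := ψ (w' - x) with hT
      have hT1 : 1 ≤ T := by
        have h2 := hw'max w₁ hw₁A
        have h1 : ψ (w₁ - x) = 1 := by rw [← hu]; exact hψ
        rw [map_sub] at h1
        rw [hT, map_sub]
        linarith
      have hTpos : 0 < T := by linarith
      have hw'x : w' ≠ x := by
        intro h
        rw [h, sub_self, map_zero] at hT
        linarith
      refine ⟨m, w', hw'x, hx, hw'A, le_refl _, ?_⟩
      intro w hw
      rw [Finset.mem_coe] at hw
      have hwA : w ∈ A := hw
      set t := ψ (w - x) with htdef
      have htnn : 0 ≤ t := by rw [htdef]; exact hnonneg w hwA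
      have htT : t ≤ T := by
        have h3 := hw'max w hwA
        rw [htdef, hT, map_sub, map_sub]
        linarith
      have hweq : w = x + t • u := by rw [htdef]; exact hcoef w hwA
      have hw'eq : w' = x + T • u := by rw [hT]; exact hcoef w' hw'A
      have hdiv1 : t / T ≤ 1 := (div_le_one hTpos).2 htT
      have hdiv0 : 0 ≤ t / T := by positivity
      refine ⟨1 - t / T, t / T, by linarith, hdiv0, by ring, ?_⟩
      rw [hweq, hw'eq, smul_add, smul_smul, ← add_assoc, ← add_smul]
      rw [show (1 - t/T) + t/T = (1:ℝ) by ring, one_smul,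
        div_mul_cancel₀ t (ne_of_gt hTpos)]
    · -- non-collinear case: find an affinely independent triple, tilt, shrink, recurse
      push_neg at hline
      obtain ⟨w₂, hw₂A, hw₂⟩ := hline
      have hw₂x : w₂ ≠ x := by
        intro h
        exact hw₂ 0 (by rw [h, sub_self, zero_smul])
      have hindep : ∀ a b : ℝ, a • u + b • (w₂ - x) = 0 → a = 0 ∧ b = 0 := by
        intro a b hab
        by_cases hb : b = 0
        · subst hb
          rw [zero_smul, add_zero] at hab
          rcases smul_eq_zero.1 hab with h | h
          · exact ⟨h, rfl⟩
          · exact absurd h hune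
        · exfalso
          apply hw₂ (-(a / b))
          have hb' : b • (w₂ - x) = -(a • u) := by
            have h4 : b • (w₂ - x) + a • u = 0 := by rw [← hab]; abel
            exact eq_neg_of_add_eq_zero_left h4
          have h3 := congrArg (fun v : E => b⁻¹ • v) hb'
          simp only [smul_smul, inv_mul_cancel₀ hb, one_smul, smul_neg] at h3
          rw [h3, neg_smul]
          congr 2
          field_simp
      obtain ⟨ψ, hψ₁, hψ₂⟩ := exists_dual_pair hindep
      have hDex : ∃ w ∈ A, ψ x < ψ w := by
        refine ⟨w₁, hw₁A, ?_⟩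
        have : ψ w₁ - ψ x = 1 := by rw [← map_sub, ← hu, hψ₁]
        linarith
      obtain ⟨σ, hxσ, hσinv, hσex⟩ := tilt_lemma A x hx mx ψ
        (fun w hw hwx => hmx w (hAsubW hw) hwx) hDex
      have hw₂not : w₂ ∉ amax σ A := by
        intro hmem
        have h0 : ψ w₂ - ψ x = 0 := by rw [← map_sub, hψ₂]
        have h1 := hσinv w₂ hmem hw₂x
        linarith
      obtain ⟨ε, hεpos, hεeq⟩ := amax_perturb m σ (A := W) ⟨x, amax_subset m W hx⟩
      rw [← hAdef] at hεeq
      set m₁ := m + ε • σ with hm₁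
      have hA₁ : amax m₁ W = amax σ A := hεeq
      have hsub₁ : amax m₁ W ⊆ A := hA₁ ▸ amax_subset σ A
      have hxA₁ : x ∈ amax m₁ W := hA₁ ▸ hxσ
      have hcard₁ : (amax m₁ W).card < A.card := by
        apply Finset.card_lt_card
        rw [Finset.ssubset_iff_of_subset hsub₁]
        exact ⟨w₂, hw₂A, by rw [hA₁]; exact hw₂not⟩
      have h2₁ : 2 ≤ (amax m₁ W).card := by
        obtain ⟨w, hw, hwψ⟩ := hσex
        have hwx : w ≠ x := by rintro rfl; exact lt_irrefl _ hwψ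
        have h1 : 1 < (amax m₁ W).card := by
          refine Finset.one_lt_card.2 ⟨x, hxA₁, w, ?_, Ne.symm hwx⟩
          rw [hA₁]; exact hw
        omega
      obtain ⟨m', w', hw'x, hxm', hw'm', hsub', hseg'⟩ :=
        ih m₁ (by omega) hxA₁ h2₁
      exact ⟨m', w', hw'x, hxm', hw'm', hsub'.trans hsub₁, hseg'⟩

end Walk

section Walk2

open scoped Classical

variable {E : Type*} [AddCommGroup E] [Module ℝ E]

/-- Step lemma: from a vertex `x` of `W` lying in the exposed subset `amax m W`,
if some point of `amax m W` has larger `N'`-value, there is an exposed edge of `W`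
inside `amax m W` from `x` to a vertex `w'` with larger `N'`-value. -/
lemma step_lemma (W : Finset E) (m : E →ₗ[ℝ] ℝ) (x : E) (hxA : x ∈ amax m W)
    (hxv : isVert W x) (N' : E →ₗ[ℝ] ℝ) (hD : ∃ w ∈ amax m W, N' x < N' w) :
    ∃ w', wedge W x w' ∧ isVert W w' ∧ N' x < N' w' ∧ w' ∈ amax m W := by
  obtain ⟨hxW, mx, hmx⟩ := hxv
  set A := amax m W with hAdef
  have hAsubW : A ⊆ W := amax_subset m W
  obtain ⟨σ, hxσ, hσinv, hσex⟩ := tilt_lemma A x hxA mx N'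
    (fun w hw hwx => hmx w (hAsubW hw) hwx) hD
  obtain ⟨ε, hεpos, hεeq⟩ := amax_perturb m σ (A := W) ⟨x, hxW⟩
  rw [← hAdef] at hεeq
  set m₁ := m + ε • σ with hm₁
  have hA₁ : amax m₁ W = amax σ A := hεeq
  have hsub₁ : amax m₁ W ⊆ A := hA₁ ▸ amax_subset σ A
  have hxA₁ : x ∈ amax m₁ W := hA₁ ▸ hxσ
  have h2₁ : 2 ≤ (amax m₁ W).card := by
    obtain ⟨w, hw, hwN⟩ := hσex
    have hwx : w ≠ x := by rintro rfl; exact lt_irrefl _ hwN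
    have h1 : 1 < (amax m₁ W).card := by
      refine Finset.one_lt_card.2 ⟨x, hxA₁, w, ?_, Ne.symm hwx⟩
      rw [hA₁]; exact hw
    omega
  obtain ⟨m', w', hw'x, hxm', hw'm', hsub', hseg'⟩ :=
    shrink_to_segment W x mx hmx (amax m₁ W).card m₁ (le_refl _) hxA₁ h2₁
  have hw'N : N' x < N' w' := hσinv w' (hA₁ ▸ hsub' hw'm') hw'x
  have hw'A : w' ∈ A := hsub₁ (hsub' hw'm')
  -- w' is itself an exposed vertex of W
  have hw'vert : isVert W w' := by
    obtain ⟨ψ', hψ'⟩ := exists_dual_one (sub_ne_zero.2 hw'x)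
    have hsep : ∀ w ∈ amax m' W, w ≠ w' → ψ' w < ψ' w' := by
      intro w hw hww'
      obtain ⟨a, b, ha, hb, hab, habeq⟩ := hseg' hw
      have hb1 : b < 1 := by
        rcases lt_or_eq_of_le (show b ≤ 1 by linarith) with h | h
        · exact h
        · exfalso
          apply hww'
          rw [← habeq, h, show a = 0 by linarith, zero_smul, one_smul, zero_add]
      have hψw : ψ' w - ψ' x = b * (ψ' w' - ψ' x) := by
        rw [← map_sub, ← map_sub, show w - x = b • (w' - x) by
          rw [← habeq, smul_sub]
          rw [show a • x + b • w' - x = b • w' - b • x by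
            rw [show a = 1 - b by linarith, sub_smul, one_smul]; abel]]
        rw [map_smul, smul_eq_mul]
      have hψ'pos : ψ' w' - ψ' x = 1 := by rw [← map_sub, hψ']
      rw [hψ'pos, mul_one] at hψw
      linarith
    obtain ⟨ε', hε'pos, hε'eq⟩ := amax_perturb m' ψ' (A := W)
      ⟨x, amax_subset m' W hxm'⟩
    have hsingle : amax ψ' (amax m' W) = {w'} := by
      ext v
      simp only [Finset.mem_singleton]
      constructor
      · intro hv
        by_contra hvw'
        have h1 := (mem_amax.1 hv).2 w' hw'm'
        have h2 := hsep v (amax_subset _ _ hv) hvw'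
        linarith
      · intro hv
        rw [hv]
        exact mem_amax.2 ⟨hw'm', fun u hu => by
          by_cases huw : u = w'
          · rw [huw]
          · exact le_of_lt (hsep u hu huw)⟩
    rw [hsingle] at hε'eq
    exact isVert_of_amax_singleton hε'eq
  exact ⟨w', ⟨Ne.symm hw'x, m', hxm', hw'm', hseg'⟩, hw'vert, hw'N, hw'A⟩

/-- Walk lemma: monotone walk from a vertex of an exposed subset to the `N'`-top of
that subset, along exposed edges through exposed vertices, staying in the subset. -/
lemma walk_lemma (W : Finset E) (m : E →ₗ[ℝ] ℝ) (N' : E →ₗ[ℝ] ℝ) :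
    ∀ (k : ℕ) (x : E), ((amax m W).filter (fun w => N' x < N' w)).card ≤ k →
    x ∈ amax m W → isVert W x →
    ∃ (n : ℕ) (z : ℕ → E), z 0 = x ∧
      (∀ i ≤ n, z i ∈ amax m W ∧ isVert W (z i) ∧ N' x ≤ N' (z i)) ∧
      (∀ i < n, wedge W (z i) (z (i+1))) ∧
      (∀ w ∈ amax m W, N' w ≤ N' (z n)) := by
  intro k
  induction k with
  | zero =>
    intro x hcard hxA hxv
    refine ⟨0, fun _ => x, rfl, ?_, by omega, ?_⟩
    · intro i _; exact ⟨hxA, hxv, le_refl _⟩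
    · intro w hw
      by_contra hcon
      push_neg at hcon
      have : w ∈ (amax m W).filter (fun w => N' x < N' w) :=
        Finset.mem_filter.2 ⟨hw, hcon⟩
      have := Finset.card_pos.2 ⟨w, this⟩
      omega
  | succ k ih =>
    intro x hcard hxA hxv
    by_cases hD : ∃ w ∈ amax m W, N' x < N' w
    · obtain ⟨w', hwedge, hw'v, hw'N, hw'A⟩ := step_lemma W m x hxA hxv N' hD
      have hsub : (amax m W).filter (fun w => N' w' < N' w) ⊆
          (amax m W).filter (fun w => N' x < N' w) := by
        intro w hw
        obtain ⟨h1, h2⟩ := Finset.mem_filter.1 hw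
        exact Finset.mem_filter.2 ⟨h1, lt_trans hw'N h2⟩
      have hss : (amax m W).filter (fun w => N' w' < N' w) ⊂
          (amax m W).filter (fun w => N' x < N' w) :=
        (Finset.ssubset_iff_of_subset hsub).2
          ⟨w', Finset.mem_filter.2 ⟨hw'A, hw'N⟩,
            fun hc => lt_irrefl _ (Finset.mem_filter.1 hc).2⟩
      have hmeas : ((amax m W).filter (fun w => N' w' < N' w)).card ≤ k := by
        have := Finset.card_lt_card hss
        omega
      obtain ⟨n', z', hz'0, hz'mem, hz'edge, hz'top⟩ := ih w' hmeas hw'A hw'v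
      refine ⟨n' + 1, fun i => if i = 0 then x else z' (i - 1), by simp, ?_, ?_, ?_⟩
      · intro i hi
        by_cases h0 : i = 0
        · subst h0; simp only [if_pos rfl]; exact ⟨hxA, hxv, le_refl _⟩
        · simp only [if_neg h0]
          have hi' : i - 1 ≤ n' := by omega
          obtain ⟨ha, hb, hc⟩ := hz'mem (i - 1) hi'
          exact ⟨ha, hb, le_trans (le_of_lt hw'N) hc⟩
      · intro i hi
        by_cases h0 : i = 0
        · subst h0
          simp only [if_pos rfl, if_neg (Nat.one_ne_zero)]
          rw [show (1:ℕ) - 1 = 0 from rfl, hz'0]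
          exact hwedge
        · simp only [if_neg h0, if_neg (by omega : ¬ i + 1 = 0)]
          rw [show i + 1 - 1 = (i - 1) + 1 by omega]
          exact hz'edge (i - 1) (by omega)
      · intro w hw
        simp only [if_neg (by omega : ¬ n' + 1 = 0)]
        rw [show n' + 1 - 1 = n' from rfl]
        exact hz'top w hw
    · push_neg at hD
      refine ⟨0, fun _ => x, rfl, fun i _ => ⟨hxA, hxv, le_refl _⟩, by omega, hD⟩

end Walk2

section Paths

variable {E : Type*} [AddCommGroup E] [Module ℝ E]

/-- A good path in `W`: exposed vertices with positive `N`-value, consecutive ones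
joined by exposed edges. -/
def goodPath (W : Finset E) (N : E →ₗ[ℝ] ℝ) (n : ℕ) (z : ℕ → E) : Prop :=
  (∀ i ≤ n, isVert W (z i) ∧ 0 < N (z i)) ∧ ∀ i < n, wedge W (z i) (z (i+1))

lemma goodPath_concat {W : Finset E} {N : E →ₗ[ℝ] ℝ} {n₁ n₂ : ℕ} {z₁ z₂ : ℕ → E}
    (h₁ : goodPath W N n₁ z₁) (h₂ : goodPath W N n₂ z₂) (hj : z₁ n₁ = z₂ 0) :
    ∃ z : ℕ → E, goodPath W N (n₁ + n₂) z ∧ z 0 = z₁ 0 ∧ z (n₁ + n₂) = z₂ n₂ := by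
  refine ⟨fun i => if i ≤ n₁ then z₁ i else z₂ (i - n₁), ⟨?_, ?_⟩, by simp, ?_⟩
  · intro i hi
    by_cases h : i ≤ n₁
    · simp only [if_pos h]; exact h₁.1 i h
    · simp only [if_neg h]; exact h₂.1 (i - n₁) (by omega)
  · intro i hi
    by_cases h : i + 1 ≤ n₁
    · simp only [if_pos h, if_pos (by omega : i ≤ n₁)]
      exact h₁.2 i (by omega)
    · by_cases h' : i ≤ n₁
      · have hieq : i = n₁ := by omega
        subst hieq
        simp only [if_pos h', if_neg h]
        rw [show i + 1 - i = 1 from by omega]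
        have h2 : 0 < n₂ := by omega
        have := h₂.2 0 h2
        rw [← hj] at this
        exact this
      · simp only [if_neg h, if_neg h']
        rw [show i + 1 - n₁ = (i - n₁) + 1 by omega]
        exact h₂.2 (i - n₁) (by omega)
  · by_cases h : n₁ + n₂ ≤ n₁
    · have h0 : n₂ = 0 := by omega
      subst h0
      simpa using hj
    · show (if n₁ + n₂ ≤ n₁ then z₁ (n₁ + n₂) else z₂ (n₁ + n₂ - n₁)) = z₂ n₂
      rw [if_neg h, show n₁ + n₂ - n₁ = n₂ by omega]

lemma goodPath_reverse {W : Finset E} {N : E →ₗ[ℝ] ℝ} {n : ℕ} {z : ℕ → E}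
    (h : goodPath W N n z) :
    ∃ z' : ℕ → E, goodPath W N n z' ∧ z' 0 = z n ∧ z' n = z 0 := by
  refine ⟨fun i => z (n - i), ⟨?_, ?_⟩, by simp, by simp⟩
  · intro i hi
    exact h.1 (n - i) (by omega)
  · intro i hi
    show wedge W (z (n - i)) (z (n - (i + 1)))
    have h1 : n - i = (n - (i + 1)) + 1 := by omega
    rw [h1]
    exact wedge_symm (h.2 (n - (i + 1)) (by omega))

end Paths

section Hull

open scoped Classical

variable {E : Type*} [AddCommGroup E] [Module ℝ E]

lemma convexHull_finset_le (A : Finset E) (f : E →ₗ[ℝ] ℝ) (M : ℝ)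
    (h : ∀ s ∈ A, f s ≤ M) {x : E} (hx : x ∈ convexHull ℝ (A : Set E)) : f x ≤ M := by
  have hsub : convexHull ℝ (A : Set E) ⊆ {y | f y ≤ M} :=
    convexHull_min (fun s hs => h s (Finset.mem_coe.1 hs))
      (convex_halfSpace_le f.isLinear M)
  exact hsub hx

/-- The exposed subset of `conv S` for a functional `f` is the hull of the argmax. -/
lemma exposed_hull_eq (S : Finset E) (hS : S.Nonempty) (f : E →ₗ[ℝ] ℝ) :
    {x ∈ convexHull ℝ (S : Set E) | ∀ y ∈ convexHull ℝ (S : Set E), f y ≤ f x} =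
      convexHull ℝ (amax f S : Set E) := by
  obtain ⟨b₀, hb₀⟩ := amax_nonempty f hS
  set M := f b₀ with hMdef
  have hM : ∀ s ∈ S, f s ≤ M := (mem_amax.1 hb₀).2
  have hMam : ∀ w ∈ amax f S, f w = M := fun w hw => amax_const_on hw hb₀
  have hb₀P : (b₀ : E) ∈ convexHull ℝ (S : Set E) :=
    subset_convexHull ℝ (S : Set E) (Finset.mem_coe.2 (amax_subset f S hb₀))
  have hamem : ∀ y ∈ S, f y = M → y ∈ amax f S := by
    intro y hy hfy
    exact mem_amax.2 ⟨hy, fun v hv => hfy ▸ hM v hv⟩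
  ext x
  simp only [Set.mem_setOf_eq]
  constructor
  · rintro ⟨hxP, hxmax⟩
    have hxM : f x = M :=
      le_antisymm (convexHull_finset_le S f M hM hxP) (hxmax b₀ hb₀P)
    rw [Finset.convexHull_eq] at hxP
    obtain ⟨w, hw0, hw1, hcm⟩ := hxP
    have hxsum : x = ∑ y ∈ S, w y • y := by
      rw [← hcm, Finset.centerMass_eq_of_sum_1 _ _ hw1]
      simp
    have hfx : ∑ y ∈ S, w y * f y = M := by
      have := congrArg f hxsum
      rw [map_sum] at this
      simp only [map_smul, smul_eq_mul] at this
      rw [← this, hxM]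
    have hsum0 : ∑ y ∈ S, w y * (M - f y) = 0 := by
      have h1 : ∑ y ∈ S, (w y * M - w y * f y) = 0 := by
        rw [Finset.sum_sub_distrib, ← Finset.sum_mul, hw1, one_mul, hfx, sub_self]
      rw [← h1]
      congr 1
      ext y
      ring
    have hterm : ∀ y ∈ S, w y * (M - f y) = 0 :=
      (Finset.sum_eq_zero_iff_of_nonneg
        (fun y hy => mul_nonneg (hw0 y hy) (by linarith [hM y hy]))).1 hsum0
    have hzero : ∀ y ∈ S, y ∉ amax f S → w y = 0 := by
      intro y hy hny
      have hfy : f y < M := by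
        rcases lt_or_eq_of_le (hM y hy) with h | h
        · exact h
        · exact absurd (hamem y hy h) hny
      rcases mul_eq_zero.1 (hterm y hy) with h | h
      · exact h
      · linarith
    rw [Finset.convexHull_eq]
    refine ⟨w, fun y hy => hw0 y (amax_subset f S hy), ?_, ?_⟩
    · rw [Finset.sum_subset (amax_subset f S) (fun y hy hny => hzero y hy hny)]
      exact hw1
    · have hsum1 : ∑ y ∈ amax f S, w y = 1 := by
        rw [Finset.sum_subset (amax_subset f S) (fun y hy hny => hzero y hy hny)]
        exact hw1
      rw [Finset.centerMass_eq_of_sum_1 _ _ hsum1]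
      simp only [id_eq]
      rw [Finset.sum_subset (amax_subset f S)
        (fun y hy hny => by rw [hzero y hy hny, zero_smul])]
      exact hxsum.symm
  · intro hy
    have hyS : x ∈ convexHull ℝ (S : Set E) :=
      convexHull_mono (fun v hv => Finset.mem_coe.2 (amax_subset f S (Finset.mem_coe.1 hv))) hy
    have hfyM : f x = M := by
      refine le_antisymm (convexHull_finset_le (amax f S) f M
        (fun w hw => (hMam w hw).le) hy) ?_
      have hneg := convexHull_finset_le (amax f S) (-f) (-M)
        (fun w hw => by simp [hMam w hw]) hy
      simpa using hneg
    exact ⟨hyS, fun v hv => by rw [hfyM]; exact convexHull_finset_le S f M hM hv⟩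

end Hull

/-- `x` is a vertex of the polytope `P`: the singleton `{x}` is an exposed face. -/
def PVertex {d : ℕ} (P : Set (Fin d → ℝ)) (x : Fin d → ℝ) : Prop :=
  IsExposed ℝ P {x}

/-- The segment from `x` to `y` is an edge of `P`: a 1-dimensional exposed face with
endpoints `x ≠ y`. -/
def PEdge {d : ℕ} (P : Set (Fin d → ℝ)) (x y : Fin d → ℝ) : Prop :=
  x ≠ y ∧ IsExposed ℝ P (segment ℝ x y)

/-- A 2-dimensional (exposed) face of the polytope `P`. -/
def P2Face {d : ℕ} (P : Set (Fin d → ℝ)) (Fc : Set (Fin d → ℝ)) : Prop :=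
  IsExposed ℝ P Fc ∧ Module.finrank ℝ (vectorSpan ℝ Fc) = 2

section Dict

open scoped Classical

variable {d : ℕ}

/-- normalization of the direction from `α` to `s` onto the hyperplane `ℓ = ℓ α - 1`. -/
noncomputable def eta (α : Fin d → ℝ) (ℓ : (Fin d → ℝ) →ₗ[ℝ] ℝ) (s : Fin d → ℝ) :
    Fin d → ℝ := (ℓ α - ℓ s)⁻¹ • (s - α)

/-- the vertex figure of `conv S` at `α`. -/
noncomputable def Wfig (S : Finset (Fin d → ℝ)) (α : Fin d → ℝ)
    (ℓ : (Fin d → ℝ) →ₗ[ℝ] ℝ) : Finset (Fin d → ℝ) := (S.erase α).image (eta α ℓ)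

/-- the points of `S` on the ray from `α` in direction `z`. -/
noncomputable def preRay (S : Finset (Fin d → ℝ)) (α : Fin d → ℝ)
    (ℓ : (Fin d → ℝ) →ₗ[ℝ] ℝ) (z : Fin d → ℝ) : Finset (Fin d → ℝ) :=
  (S.erase α).filter (fun s => eta α ℓ s = z)

/-- the farthest point of `S` on the ray from `α` in direction `z`. -/
noncomputable def farPt (S : Finset (Fin d → ℝ)) (α : Fin d → ℝ)
    (ℓ : (Fin d → ℝ) →ₗ[ℝ] ℝ) (z : Fin d → ℝ) : Fin d → ℝ :=
  if h : (preRay S α ℓ z).Nonempty then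
    Classical.choose ((preRay S α ℓ z).exists_max_image (fun s => ℓ α - ℓ s) h)
  else α

variable {S : Finset (Fin d → ℝ)} {α : Fin d → ℝ} {ℓ : (Fin d → ℝ) →ₗ[ℝ] ℝ}

lemma cpos (hsep : ∀ s ∈ S, s ≠ α → ℓ s < ℓ α) {s : Fin d → ℝ} (hs : s ∈ S.erase α) :
    0 < ℓ α - ℓ s := by
  have h1 := Finset.mem_erase.1 hs
  have := hsep s h1.2 h1.1
  linarith

lemma eta_sub (hsep : ∀ s ∈ S, s ≠ α → ℓ s < ℓ α) {s : Fin d → ℝ} (hs : s ∈ S.erase α) :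
    s - α = (ℓ α - ℓ s) • eta α ℓ s := by
  rw [eta, smul_smul, mul_inv_cancel₀ (ne_of_gt (cpos hsep hs)), one_smul]

lemma eta_ell (hsep : ∀ s ∈ S, s ≠ α → ℓ s < ℓ α) {s : Fin d → ℝ} (hs : s ∈ S.erase α) :
    ℓ (eta α ℓ s) = -1 := by
  rw [eta, map_smul, smul_eq_mul, map_sub]
  field_simp [ne_of_gt (cpos hsep hs)]
  ring

lemma eta_apply (F : (Fin d → ℝ) →ₗ[ℝ] ℝ) (s : Fin d → ℝ) :
    F (eta α ℓ s) = (ℓ α - ℓ s)⁻¹ * (F s - F α) := by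
  rw [eta, map_smul, smul_eq_mul, map_sub]

lemma W_ell (hsep : ∀ s ∈ S, s ≠ α → ℓ s < ℓ α) {z : Fin d → ℝ}
    (hz : z ∈ Wfig S α ℓ) : ℓ z = -1 := by
  obtain ⟨s, hs, rfl⟩ := Finset.mem_image.1 hz
  exact eta_ell hsep hs

lemma W_ne_zero (hsep : ∀ s ∈ S, s ≠ α → ℓ s < ℓ α) {z : Fin d → ℝ}
    (hz : z ∈ Wfig S α ℓ) : z ≠ 0 := by
  intro h
  have := W_ell hsep hz
  rw [h, map_zero] at this
  norm_num at this

lemma preRay_nonempty {z : Fin d → ℝ} (hz : z ∈ Wfig S α ℓ) :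
    (preRay S α ℓ z).Nonempty := by
  obtain ⟨s, hs, hes⟩ := Finset.mem_image.1 hz
  exact ⟨s, Finset.mem_filter.2 ⟨hs, hes⟩⟩

lemma farPt_spec {z : Fin d → ℝ} (hz : z ∈ Wfig S α ℓ) :
    farPt S α ℓ z ∈ preRay S α ℓ z ∧
      ∀ s ∈ preRay S α ℓ z, ℓ α - ℓ s ≤ ℓ α - ℓ (farPt S α ℓ z) := by
  have h := preRay_nonempty hz
  rw [farPt, dif_pos h]
  obtain ⟨h1, h2⟩ := Classical.choose_spec ((preRay S α ℓ z).exists_max_image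
    (fun s => ℓ α - ℓ s) h)
  exact ⟨h1, h2⟩

lemma mem_preRay_sub (hsep : ∀ s ∈ S, s ≠ α → ℓ s < ℓ α) {z s : Fin d → ℝ}
    (hs : s ∈ preRay S α ℓ z) : s - α = (ℓ α - ℓ s) • z ∧ s ∈ S.erase α := by
  obtain ⟨h1, h2⟩ := Finset.mem_filter.1 hs
  exact ⟨by rw [← h2]; exact eta_sub hsep h1, h1⟩

lemma farPt_sub (hsep : ∀ s ∈ S, s ≠ α → ℓ s < ℓ α) {z : Fin d → ℝ}
    (hz : z ∈ Wfig S α ℓ) :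
    farPt S α ℓ z - α = (ℓ α - ℓ (farPt S α ℓ z)) • z ∧
      farPt S α ℓ z ∈ S.erase α ∧ 0 < ℓ α - ℓ (farPt S α ℓ z) := by
  obtain ⟨h1, _⟩ := farPt_spec hz
  obtain ⟨h2, h3⟩ := mem_preRay_sub hsep h1
  exact ⟨h2, h3, cpos hsep h3⟩

lemma farPt_ne (hsep : ∀ s ∈ S, s ≠ α → ℓ s < ℓ α) {z : Fin d → ℝ}
    (hz : z ∈ Wfig S α ℓ) : α ≠ farPt S α ℓ z := by
  obtain ⟨h1, h2, h3⟩ := farPt_sub hsep hz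
  intro h
  rw [← h, sub_self] at h3
  exact lt_irrefl 0 h3

lemma preRay_subset_segment (hsep : ∀ s ∈ S, s ≠ α → ℓ s < ℓ α) {z : Fin d → ℝ}
    (hz : z ∈ Wfig S α ℓ) {s : Fin d → ℝ} (hs : s ∈ preRay S α ℓ z) :
    s ∈ segment ℝ α (farPt S α ℓ z) := by
  obtain ⟨hsub, hmem⟩ := mem_preRay_sub hsep hs
  obtain ⟨hfsub, hfmem, hfpos⟩ := farPt_sub hsep hz
  set cs := ℓ α - ℓ s with hcs
  set c := ℓ α - ℓ (farPt S α ℓ z) with hc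
  have hcspos : 0 < cs := cpos hsep hmem
  have hcsc : cs ≤ c := (farPt_spec hz).2 s hs
  have hdiv1 : cs / c ≤ 1 := (div_le_one hfpos).2 hcsc
  have hdiv0 : 0 ≤ cs / c := by positivity
  refine ⟨1 - cs / c, cs / c, by linarith, hdiv0, by ring, ?_⟩
  have hseq : s = α + cs • z := by rw [← hsub]; abel
  have hfeq : farPt S α ℓ z = α + c • z := by rw [← hfsub]; abel
  rw [hseq, hfeq, smul_add, smul_smul, ← add_assoc, ← add_smul]
  rw [show (1 - cs/c) + cs/c = (1:ℝ) by ring, one_smul,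
    div_mul_cancel₀ cs (ne_of_gt hfpos)]

/-- Translation: faces of `Wfig` exposed by `m` correspond to faces of `conv S` at `α`
exposed by `m + μ • ℓ`. -/
lemma amax_translate (hsep : ∀ s ∈ S, s ≠ α → ℓ s < ℓ α) (hαS : α ∈ S)
    (m : (Fin d → ℝ) →ₗ[ℝ] ℝ) (μ : ℝ) (hμ : ∀ w ∈ Wfig S α ℓ, m w ≤ μ) :
    amax (m + μ • ℓ) S =
      insert α ((S.erase α).filter (fun s => m (eta α ℓ s) = μ)) := by
  set lam := m + μ • ℓ with hlam
  have hkey : ∀ s ∈ S.erase α, lam s - lam α = (ℓ α - ℓ s) * (m (eta α ℓ s) - μ) := by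
    intro s hs
    have h1 : m s - m α = (ℓ α - ℓ s) * m (eta α ℓ s) := by
      have := congrArg m (eta_sub hsep hs)
      rw [map_sub, map_smul, smul_eq_mul] at this
      linarith
    simp only [hlam, LinearMap.add_apply, LinearMap.smul_apply, smul_eq_mul]
    ring_nf
    nlinarith [h1]
  have hαmax : ∀ v ∈ S, lam v ≤ lam α := by
    intro v hv
    by_cases hvα : v = α
    · rw [hvα]
    · have hve : v ∈ S.erase α := Finset.mem_erase.2 ⟨hvα, hv⟩
      have h1 := hkey v hve
      have h2 : m (eta α ℓ v) - μ ≤ 0 := by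
        have := hμ (eta α ℓ v) (Finset.mem_image_of_mem _ hve)
        linarith
      nlinarith [cpos hsep hve]
  ext s
  simp only [Finset.mem_insert, Finset.mem_filter]
  constructor
  · intro hs
    obtain ⟨hsS, hsmax⟩ := mem_amax.1 hs
    by_cases hsα : s = α
    · exact Or.inl hsα
    · right
      have hse : s ∈ S.erase α := Finset.mem_erase.2 ⟨hsα, hsS⟩
      have heq : lam s = lam α := le_antisymm (hαmax s hsS) (hsmax α hαS)
      have h1 := hkey s hse
      rw [heq, sub_self] at h1
      have h2 : m (eta α ℓ s) - μ = 0 := by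
        rcases mul_eq_zero.1 h1.symm with h | h
        · exact absurd h (ne_of_gt (cpos hsep hse))
        · exact h
      exact ⟨hse, by linarith⟩
  · intro hs
    rcases hs with hsα | ⟨hse, hμeq⟩
    · rw [hsα]; exact mem_amax.2 ⟨hαS, hαmax⟩
    · have h1 := hkey s hse
      rw [hμeq, sub_self, mul_zero] at h1
      have heq : lam s = lam α := by linarith
      exact mem_amax.2 ⟨(Finset.mem_erase.1 hse).2,
        fun v hv => heq ▸ hαmax v hv⟩

end Dict

section Dict2

open scoped Classical

variable {d : ℕ} {S : Finset (Fin d → ℝ)} {α : Fin d → ℝ} {ℓ : (Fin d → ℝ) →ₗ[ℝ] ℝ}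

lemma amax_zero {E : Type*} [AddCommGroup E] [Module ℝ E] (W : Finset E) :
    amax (0 : E →ₗ[ℝ] ℝ) W = W := by
  ext w
  simp [mem_amax]

lemma exposed_of_amax {P : Set (Fin d → ℝ)} (hP : P = convexHull ℝ (S : Set (Fin d → ℝ)))
    (hS : S.Nonempty) (f : (Fin d → ℝ) →ₗ[ℝ] ℝ) :
    IsExposed ℝ P (convexHull ℝ (amax f S : Set (Fin d → ℝ))) := by
  intro _
  refine ⟨LinearMap.toContinuousLinearMap f, ?_⟩
  rw [hP]
  simp only [LinearMap.coe_toContinuousLinearMap']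
  exact (exposed_hull_eq S hS f).symm

lemma vertex_to_edge {P : Set (Fin d → ℝ)} (hP : P = convexHull ℝ (S : Set (Fin d → ℝ)))
    (hS : S.Nonempty) (hsep : ∀ s ∈ S, s ≠ α → ℓ s < ℓ α) (hαS : α ∈ S)
    {z : Fin d → ℝ} (hz : z ∈ Wfig S α ℓ) (mz : (Fin d → ℝ) →ₗ[ℝ] ℝ)
    (hmz : ∀ w ∈ Wfig S α ℓ, w ≠ z → mz w < mz z) :
    PEdge P α (farPt S α ℓ z) := by
  set lam := mz + (mz z) • ℓ with hlam
  have hμ : ∀ w ∈ Wfig S α ℓ, mz w ≤ mz z := by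
    intro w hw
    by_cases hwz : w = z
    · rw [hwz]
    · exact le_of_lt (hmz w hw hwz)
  have htr := amax_translate hsep hαS mz (mz z) hμ
  have hfe : (S.erase α).filter (fun s => mz (eta α ℓ s) = mz z) = preRay S α ℓ z := by
    ext s
    simp only [preRay, Finset.mem_filter]
    constructor
    · rintro ⟨h1, h2⟩
      refine ⟨h1, ?_⟩
      by_contra hne
      exact absurd h2 (ne_of_lt (hmz _ (Finset.mem_image_of_mem _ h1) hne))
    · rintro ⟨h1, h2⟩
      exact ⟨h1, by rw [h2]⟩
  rw [hfe] at htr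
  have hconv : convexHull ℝ ((amax lam S : Finset (Fin d → ℝ)) : Set (Fin d → ℝ)) =
      segment ℝ α (farPt S α ℓ z) := by
    apply Set.Subset.antisymm
    · apply convexHull_min
      · intro x hx
        rw [Finset.mem_coe, htr, Finset.mem_insert] at hx
        rcases hx with rfl | hx
        · exact left_mem_segment ℝ _ _
        · exact preRay_subset_segment hsep hz hx
      · exact convex_segment _ _
    · rw [← convexHull_pair]
      apply convexHull_mono
      intro x hx
      rcases hx with rfl | hx
      · rw [Finset.mem_coe, htr]
        exact Finset.mem_insert_self _ _
      · rw [Set.mem_singleton_iff] at hx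
        subst hx
        rw [Finset.mem_coe, htr, Finset.mem_insert]
        exact Or.inr (farPt_spec hz).1
  refine ⟨farPt_ne hsep hz, fun _ => ⟨LinearMap.toContinuousLinearMap lam, ?_⟩⟩
  rw [hP]
  simp only [LinearMap.coe_toContinuousLinearMap']
  rw [exposed_hull_eq S hS lam] at *
  exact hconv.symm

end Dict2

section Dict3

open scoped Classical

variable {d : ℕ} {S : Finset (Fin d → ℝ)} {α : Fin d → ℝ} {ℓ : (Fin d → ℝ) →ₗ[ℝ] ℝ}

lemma wedge_to_face {P : Set (Fin d → ℝ)} (hP : P = convexHull ℝ (S : Set (Fin d → ℝ)))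
    (hS : S.Nonempty) (hsep : ∀ s ∈ S, s ≠ α → ℓ s < ℓ α) (hαS : α ∈ S)
    {u v : Fin d → ℝ} (hw : wedge (Wfig S α ℓ) u v) :
    ∃ Fc : Set (Fin d → ℝ), P2Face P Fc ∧ α ∈ Fc ∧
      segment ℝ α (farPt S α ℓ u) ⊆ Fc ∧ segment ℝ α (farPt S α ℓ v) ⊆ Fc := by
  obtain ⟨huv, m', hu, hv, hseg⟩ := hw
  have huW : u ∈ Wfig S α ℓ := amax_subset _ _ hu
  have hvW : v ∈ Wfig S α ℓ := amax_subset _ _ hv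
  set μ := m' u with hμdef
  have hμ : ∀ w ∈ Wfig S α ℓ, m' w ≤ μ := (mem_amax.1 hu).2
  have hμv : m' v = μ := amax_const_on hv hu
  set lam := m' + μ • ℓ with hlam
  have htr := amax_translate hsep hαS m' μ hμ
  set Fc : Set (Fin d → ℝ) :=
    convexHull ℝ ((amax lam S : Finset (Fin d → ℝ)) : Set (Fin d → ℝ)) with hFc
  have hexp : IsExposed ℝ P Fc := exposed_of_amax hP hS lam
  have hαam : α ∈ amax lam S := by rw [htr]; exact Finset.mem_insert_self _ _
  have hαFc : α ∈ Fc := subset_convexHull ℝ _ (Finset.mem_coe.2 hαam)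
  -- the two ray endpoints belong to the face
  have hfar : ∀ w : Fin d → ℝ, w ∈ amax m' (Wfig S α ℓ) → farPt S α ℓ w ∈ amax lam S := by
    intro w hwam
    have hwW : w ∈ Wfig S α ℓ := amax_subset _ _ hwam
    obtain ⟨hpre, _⟩ := farPt_spec hwW
    obtain ⟨hfe, heta⟩ := Finset.mem_filter.1 hpre
    rw [htr, Finset.mem_insert]
    right
    rw [Finset.mem_filter]
    refine ⟨hfe, ?_⟩
    rw [heta]
    exact amax_const_on hwam hu
  have hfaru : farPt S α ℓ u ∈ Fc :=
    subset_convexHull ℝ _ (Finset.mem_coe.2 (hfar u hu))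
  have hfarv : farPt S α ℓ v ∈ Fc :=
    subset_convexHull ℝ _ (Finset.mem_coe.2 (hfar v hv))
  have hsegu : segment ℝ α (farPt S α ℓ u) ⊆ Fc := by
    rw [← convexHull_pair]
    exact convexHull_min (by
      intro x hx
      rcases hx with rfl | hx
      · exact hαFc
      · rw [Set.mem_singleton_iff] at hx; subst hx; exact hfaru)
      (convex_convexHull ℝ _)
  have hsegv : segment ℝ α (farPt S α ℓ v) ⊆ Fc := by
    rw [← convexHull_pair]
    exact convexHull_min (by
      intro x hx
      rcases hx with rfl | hx
      · exact hαFc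
      · rw [Set.mem_singleton_iff] at hx; subst hx; exact hfarv)
      (convex_convexHull ℝ _)
  -- rank computation
  have hlin : LinearIndependent ℝ ![u, v] := by
    rw [LinearIndependent.pair_iff]
    intro s t hst
    have hℓst : s * (-1) + t * (-1) = 0 := by
      have := congrArg ℓ hst
      rw [map_add, map_smul, map_smul, smul_eq_mul, smul_eq_mul, map_zero,
        W_ell hsep huW, W_ell hsep hvW] at this
      linarith
    have hts : t = -s := by linarith
    rw [hts] at hst
    have h2 : s • (u - v) = 0 := by
      rw [smul_sub, sub_eq_add_neg, ← neg_smul]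
      exact hst
    rcases smul_eq_zero.1 h2 with h | h
    · constructor
      · exact h
      · rw [hts, h, neg_zero]
    · exact absurd (sub_eq_zero.1 h) huv
  set V2 := Submodule.span ℝ ({u, v} : Set (Fin d → ℝ)) with hV2
  have hFcA : Fc ⊆ {y | y - α ∈ V2} := by
    apply convexHull_min
    · intro x hx
      rw [Finset.mem_coe, htr, Finset.mem_insert] at hx
      rcases hx with rfl | hx
      · simp only [Set.mem_setOf_eq, sub_self]
        exact Submodule.zero_mem _
      · obtain ⟨hxe, hxμ⟩ := Finset.mem_filter.1 hx
        have hetaam : eta α ℓ x ∈ amax m' (Wfig S α ℓ) := by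
          refine mem_amax.2 ⟨Finset.mem_image_of_mem _ hxe, fun w hw => ?_⟩
          rw [hxμ]; exact hμ w hw
        have hetaseg : eta α ℓ x ∈ segment ℝ u v := hseg (Finset.mem_coe.2 hetaam)
        obtain ⟨a, b, _, _, _, habeq⟩ := hetaseg
        have hetaV2 : eta α ℓ x ∈ V2 := by
          rw [← habeq]
          exact Submodule.add_mem _
            (Submodule.smul_mem _ a (Submodule.subset_span (Set.mem_insert _ _)))
            (Submodule.smul_mem _ b (Submodule.subset_span
              (Set.mem_insert_of_mem _ (Set.mem_singleton _))))
        simp only [Set.mem_setOf_eq]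
        rw [eta_sub hsep hxe]
        exact Submodule.smul_mem _ _ hetaV2
    · intro y₁ h₁ y₂ h₂ a b ha hb hab
      simp only [Set.mem_setOf_eq] at h₁ h₂ ⊢
      have hmem := Submodule.add_mem V2 (Submodule.smul_mem V2 a h₁)
        (Submodule.smul_mem V2 b h₂)
      have hid : a • (y₁ - α) + b • (y₂ - α) = a • y₁ + b • y₂ - (a + b) • α := by
        rw [smul_sub, smul_sub, add_smul]; abel
      rw [hid, hab, one_smul] at hmem
      exact hmem
  have hle : vectorSpan ℝ Fc ≤ V2 := by
    rw [vectorSpan_def]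
    rw [Submodule.span_le]
    rintro t ht
    obtain ⟨p, hp, q, hq, rfl⟩ := Set.mem_vsub.1 ht
    have h1 : p - α ∈ V2 := hFcA hp
    have h2 : q - α ∈ V2 := hFcA hq
    have : p -ᵥ q = (p - α) - (q - α) := by rw [vsub_eq_sub]; abel
    rw [this]
    exact Submodule.sub_mem _ h1 h2
  have hmemdir : ∀ w : Fin d → ℝ, w ∈ Wfig S α ℓ → farPt S α ℓ w ∈ Fc →
      w ∈ vectorSpan ℝ Fc := by
    intro w hwW hwFc
    have hfu : farPt S α ℓ w -ᵥ α ∈ vectorSpan ℝ Fc := vsub_mem_vectorSpan ℝ hwFc hαFc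
    obtain ⟨hsub, _, hcpos⟩ := farPt_sub hsep hwW
    rw [vsub_eq_sub, hsub] at hfu
    have := Submodule.smul_mem (vectorSpan ℝ Fc) (ℓ α - ℓ (farPt S α ℓ w))⁻¹ hfu
    rwa [smul_smul, inv_mul_cancel₀ (ne_of_gt hcpos), one_smul] at this
  have hge : V2 ≤ vectorSpan ℝ Fc := by
    rw [hV2, Submodule.span_le]
    intro t ht
    rcases ht with rfl | ht
    · exact hmemdir t huW hfaru
    · rw [Set.mem_singleton_iff] at ht; subst ht
      exact hmemdir t hvW hfarv
  have heq : vectorSpan ℝ Fc = V2 := le_antisymm hle hge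
  have hrank : Module.finrank ℝ (vectorSpan ℝ Fc) = 2 := by
    rw [heq, hV2]
    have hran : Set.range ![u, v] = {u, v} := by
      ext w
      constructor
      · rintro ⟨i, rfl⟩
        fin_cases i
        · exact Set.mem_insert _ _
        · exact Set.mem_insert_of_mem _ rfl
      · intro hw
        rcases Set.mem_insert_iff.1 hw with rfl | hw
        · exact ⟨0, rfl⟩
        · rw [Set.mem_singleton_iff] at hw
          subst hw
          exact ⟨1, rfl⟩
    rw [← hran, finrank_span_eq_card hlin]
    simp
  exact ⟨Fc, ⟨hexp, hrank⟩, hαFc, hsegu, hsegv⟩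

end Dict3

section Dict4

open scoped Classical

variable {d : ℕ} {S : Finset (Fin d → ℝ)} {α : Fin d → ℝ} {ℓ : (Fin d → ℝ) →ₗ[ℝ] ℝ}

lemma edge_to_vertex {P : Set (Fin d → ℝ)} (hP : P = convexHull ℝ (S : Set (Fin d → ℝ)))
    (hS : S.Nonempty) (hsep : ∀ s ∈ S, s ≠ α → ℓ s < ℓ α) (hαS : α ∈ S)
    {β : Fin d → ℝ} (he : PEdge P α β) :
    β ∈ S.erase α ∧ eta α ℓ β ∈ Wfig S α ℓ ∧ farPt S α ℓ (eta α ℓ β) = β ∧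
      ∃ m₀ : (Fin d → ℝ) →ₗ[ℝ] ℝ,
        ∀ w ∈ Wfig S α ℓ, w ≠ eta α ℓ β → m₀ w < m₀ (eta α ℓ β) := by
  obtain ⟨hαβ, hexp⟩ := he
  obtain ⟨lC, hl⟩ := hexp ⟨α, left_mem_segment ℝ α β⟩
  set f := (lC : (Fin d → ℝ) →ₗ[ℝ] ℝ) with hf
  have hl' : segment ℝ α β = {x ∈ P | ∀ y ∈ P, f y ≤ f x} := hl
  have hP' : segment ℝ α β = convexHull ℝ ((amax f S : Finset (Fin d → ℝ)) : Set (Fin d → ℝ)) := by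
    rw [hl', hP]
    exact exposed_hull_eq S hS f
  have hαseg := left_mem_segment ℝ α β
  have hβseg := right_mem_segment ℝ α β
  have hfmax : ∀ s ∈ S, f s ≤ f α := by
    intro s hs
    have hαin : α ∈ {x ∈ P | ∀ y ∈ P, f y ≤ f x} := hl' ▸ hαseg
    exact hαin.2 s (by rw [hP]; exact subset_convexHull ℝ _ (Finset.mem_coe.2 hs))
  have hαam : α ∈ amax f S := mem_amax.2 ⟨hαS, hfmax⟩
  have hamseg : ∀ w ∈ amax f S, w ∈ segment ℝ α β := by
    intro w hw
    rw [hP']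
    exact subset_convexHull ℝ _ (Finset.mem_coe.2 hw)
  obtain ⟨ψ, hψ⟩ := exists_dual_one (sub_ne_zero.2 (Ne.symm hαβ))
  have hparam : ∀ w ∈ segment ℝ α β, w - α = (ψ (w - α)) • (β - α) ∧
      0 ≤ ψ (w - α) ∧ ψ (w - α) ≤ 1 := by
    rintro w ⟨a, b, ha, hb, hab, rfl⟩
    have hsub : a • α + b • β - α = b • (β - α) := by
      rw [smul_sub, show a = 1 - b by linarith, sub_smul, one_smul]
      abel
    rw [hsub, map_smul, smul_eq_mul, hψ, mul_one]
    exact ⟨rfl, hb, by linarith⟩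
  obtain ⟨w₀, hw₀am, hw₀max⟩ := (amax f S).exists_max_image (fun w => ψ (w - α)) ⟨α, hαam⟩
  have hβhull : β ∈ convexHull ℝ ((amax f S : Finset (Fin d → ℝ)) : Set (Fin d → ℝ)) :=
    hP' ▸ hβseg
  have hψbound : ∀ w ∈ amax f S, ψ w ≤ ψ w₀ := by
    intro w hw
    have := hw₀max w hw
    rw [map_sub, map_sub] at this
    linarith
  have hψβ : ψ β ≤ ψ w₀ := convexHull_finset_le _ ψ (ψ w₀) hψbound hβhull
  obtain ⟨hw₀sub, hw₀0, hw₀1⟩ := hparam w₀ (hamseg w₀ hw₀am)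
  have hψβα : ψ (β - α) = 1 := hψ
  have hT1 : (1:ℝ) ≤ ψ (w₀ - α) := by
    rw [map_sub] at hψβα ⊢
    have hψα : ψ α ≤ ψ w₀ := hψbound α hαam
    linarith
  have hw₀β : w₀ = β := by
    have h1 : ψ (w₀ - α) = 1 := le_antisymm hw₀1 hT1
    rw [h1, one_smul] at hw₀sub
    exact sub_left_inj.1 hw₀sub
  have hβam : β ∈ amax f S := hw₀β ▸ hw₀am
  have hβS : β ∈ S := amax_subset f S hβam
  have hβe : β ∈ S.erase α := Finset.mem_erase.2 ⟨Ne.symm hαβ, hβS⟩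
  have hx₀W : eta α ℓ β ∈ Wfig S α ℓ := Finset.mem_image_of_mem _ hβe
  have hfβα : f β = f α := amax_const_on hβam hαam
  have hfx₀ : f (eta α ℓ β) = 0 := by
    rw [eta_apply f β, hfβα, sub_self, mul_zero]
  have hmem_amax_of : ∀ s ∈ S, f s = f α → s ∈ amax f S :=
    fun s hs hfs => mem_amax.2 ⟨hs, fun v hv => hfs ▸ hfmax v hv⟩
  have hcβ : 0 < ℓ α - ℓ β := cpos hsep hβe
  have hrayx₀ : ∀ s ∈ S.erase α, f (eta α ℓ s) = 0 →
      eta α ℓ s = eta α ℓ β ∧ ℓ α - ℓ s ≤ ℓ α - ℓ β := by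
    intro s hse hf0
    have hcs := cpos hsep hse
    have hfsα : f s = f α := by
      have heq := eta_apply (α := α) (ℓ := ℓ) f s
      rw [hf0] at heq
      have hinv : (ℓ α - ℓ s)⁻¹ ≠ 0 := inv_ne_zero (ne_of_gt hcs)
      rcases mul_eq_zero.1 heq.symm with h | h
      · exact absurd h hinv
      · linarith
    have hsam : s ∈ amax f S := hmem_amax_of s (Finset.mem_erase.1 hse).2 hfsα
    obtain ⟨hssub, hs0, hs1⟩ := hparam s (hamseg s hsam)
    set t := ψ (s - α) with htdef
    have htpos : 0 < t := by
      rcases lt_or_eq_of_le hs0 with h | h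
      · exact h
      · exfalso
        rw [← h, zero_smul] at hssub
        exact (Finset.mem_erase.1 hse).1 (sub_eq_zero.1 hssub)
    have hclel : ℓ α - ℓ s = t * (ℓ α - ℓ β) := by
      have hcon := congrArg ℓ hssub
      rw [map_sub, map_smul, smul_eq_mul, map_sub] at hcon
      linarith
    constructor
    · rw [eta, eta, hssub, hclel, smul_smul]
      congr 1
      field_simp
    · rw [hclel]
      nlinarith
  refine ⟨hβe, hx₀W, ?_, ⟨f, ?_⟩⟩
  · obtain ⟨hpre, hmax⟩ := farPt_spec hx₀W
    obtain ⟨hfe', heta'⟩ := Finset.mem_filter.1 hpre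
    have hf0' : f (eta α ℓ (farPt S α ℓ (eta α ℓ β))) = 0 := by rw [heta']; exact hfx₀
    obtain ⟨_, hcle⟩ := hrayx₀ _ hfe' hf0'
    have hβpre : β ∈ preRay S α ℓ (eta α ℓ β) :=
      Finset.mem_filter.2 ⟨hβe, rfl⟩
    have hcge : ℓ α - ℓ β ≤ ℓ α - ℓ (farPt S α ℓ (eta α ℓ β)) := hmax β hβpre
    have hceq : ℓ α - ℓ (farPt S α ℓ (eta α ℓ β)) = ℓ α - ℓ β := le_antisymm hcle hcge
    obtain ⟨hfsub, _, _⟩ := farPt_sub hsep hx₀W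
    have hβsub : β - α = (ℓ α - ℓ β) • eta α ℓ β := eta_sub hsep hβe
    rw [hceq] at hfsub
    have hfin : farPt S α ℓ (eta α ℓ β) - α = β - α := by rw [hfsub, ← hβsub]
    exact sub_left_inj.1 hfin
  · intro w hwW hwne
    rw [hfx₀]
    obtain ⟨s, hse, rfl⟩ := Finset.mem_image.1 hwW
    have hfle : f (eta α ℓ s) ≤ 0 := by
      rw [eta_apply f s]
      have h1 : f s - f α ≤ 0 := by linarith [hfmax s (Finset.mem_erase.1 hse).2]
      have h2 : 0 ≤ (ℓ α - ℓ s)⁻¹ := le_of_lt (inv_pos.2 (cpos hsep hse))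
      exact mul_nonpos_iff.2 (Or.inl ⟨h2, h1⟩)
    rcases lt_or_eq_of_le hfle with h | h
    · exact h
    · exact absurd (hrayx₀ s hse h).1 hwne

end Dict4

/-- Let `P` be a convex polytope, `α` a vertex of `P`, and `L` a linear
functional not constant on any edge of `P`.  If `e = [α, β]` and `f = [α, γ]` are edges
of `P` along which `L` increases going away from `α`, then there is a path of
2-dimensional faces of `P` incident to `α` connecting `e` to `f`, all of whose
connecting edges are incident to `α` and `L`-increasing (so all these faces lie on the
`L`-positive side of `α`). -/
theorem path_of_two_faces_around_vertex {d : ℕ} (S : Finset (Fin d → ℝ))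
    (P : Set (Fin d → ℝ)) (hP : P = convexHull ℝ (S : Set (Fin d → ℝ)))
    (α : Fin d → ℝ) (hα : PVertex P α)
    (L : (Fin d → ℝ) →ₗ[ℝ] ℝ)
    (hL : ∀ x y : Fin d → ℝ, PEdge P x y → L x ≠ L y)
    (β γ : Fin d → ℝ)
    (he : PEdge P α β) (hf : PEdge P α γ)
    (hβ : L α < L β) (hγ : L α < L γ) :
    ∃ (k : ℕ) (g : ℕ → Fin d → ℝ), g 0 = β ∧ g k = γ ∧
      (∀ i ≤ k, PEdge P α (g i) ∧ L α < L (g i)) ∧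
      ∀ i < k, ∃ Fc : Set (Fin d → ℝ), P2Face P Fc ∧ α ∈ Fc ∧
        segment ℝ α (g i) ⊆ Fc ∧ segment ℝ α (g (i + 1)) ⊆ Fc := by
  classical
  obtain ⟨ℓC, hℓ⟩ := hα ⟨α, rfl⟩
  set ℓ : (Fin d → ℝ) →ₗ[ℝ] ℝ := (ℓC : (Fin d → ℝ) →ₗ[ℝ] ℝ) with hℓdef
  have hℓ' : ({α} : Set (Fin d → ℝ)) = {x ∈ P | ∀ y ∈ P, ℓ y ≤ ℓ x} := hℓ
  have hαin : α ∈ {x ∈ P | ∀ y ∈ P, ℓ y ≤ ℓ x} := hℓ' ▸ Set.mem_singleton α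
  have hαP : α ∈ P := hαin.1
  have hαmax : ∀ y ∈ P, ℓ y ≤ ℓ α := hαin.2
  have hS : S.Nonempty := by
    by_contra hSe
    rw [Finset.not_nonempty_iff_eq_empty] at hSe
    rw [hSe] at hP
    simp only [Finset.coe_empty, convexHull_empty] at hP
    rw [hP] at hαP
    exact hαP
  have hmemP : ∀ s ∈ S, s ∈ P := fun s hs => by
    rw [hP]; exact subset_convexHull ℝ _ (Finset.mem_coe.2 hs)
  have hsep : ∀ s ∈ S, s ≠ α → ℓ s < ℓ α := by
    intro s hs hsne
    rcases lt_or_eq_of_le (hαmax s (hmemP s hs)) with h | h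
    · exact h
    · exfalso
      have hsin : s ∈ {x ∈ P | ∀ y ∈ P, ℓ y ≤ ℓ x} :=
        ⟨hmemP s hs, fun y hy => h ▸ hαmax y hy⟩
      rw [← hℓ', Set.mem_singleton_iff] at hsin
      exact hsne hsin
  have hαS : α ∈ S := by
    have h1 : ({α} : Set (Fin d → ℝ)) =
        convexHull ℝ ((amax ℓ S : Finset (Fin d → ℝ)) : Set (Fin d → ℝ)) := by
      rw [hℓ', hP]; exact exposed_hull_eq S hS ℓ
    obtain ⟨b, hb⟩ := amax_nonempty ℓ hS
    have hbα : b ∈ ({α} : Set (Fin d → ℝ)) := by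
      rw [h1]; exact subset_convexHull ℝ _ (Finset.mem_coe.2 hb)
    rw [Set.mem_singleton_iff] at hbα
    exact hbα ▸ amax_subset ℓ S hb
  obtain ⟨hβe, hx₀W, hfarβ, m₀, hm₀⟩ := edge_to_vertex hP hS hsep hαS he
  obtain ⟨hγe, hy₀W, hfarγ, m₁, hm₁⟩ := edge_to_vertex hP hS hsep hαS hf
  have hLx₀ : 0 < L (eta α ℓ β) := by
    rw [eta_apply L β]
    exact mul_pos (inv_pos.2 (cpos hsep hβe)) (by linarith)
  have hLy₀ : 0 < L (eta α ℓ γ) := by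
    rw [eta_apply L γ]
    exact mul_pos (inv_pos.2 (cpos hsep hγe)) (by linarith)
  have hWx₀ : eta α ℓ β ∈ amax 0 (Wfig S α ℓ) := by rw [amax_zero]; exact hx₀W
  have hWy₀ : eta α ℓ γ ∈ amax 0 (Wfig S α ℓ) := by rw [amax_zero]; exact hy₀W
  obtain ⟨n₁, z₁, hz₁0, hz₁mem, hz₁edge, hz₁top⟩ :=
    walk_lemma (Wfig S α ℓ) 0 L _ (eta α ℓ β) (le_refl _) hWx₀ ⟨hx₀W, m₀, hm₀⟩
  obtain ⟨n₃, z₃, hz₃0, hz₃mem, hz₃edge, hz₃top⟩ :=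
    walk_lemma (Wfig S α ℓ) 0 L _ (eta α ℓ γ) (le_refl _) hWy₀ ⟨hy₀W, m₁, hm₁⟩
  have hτ₁W : z₁ n₁ ∈ Wfig S α ℓ := by
    have h1 := (hz₁mem n₁ (le_refl _)).1
    rwa [amax_zero] at h1
  have hτ₂W : z₃ n₃ ∈ Wfig S α ℓ := by
    have h1 := (hz₃mem n₃ (le_refl _)).1
    rwa [amax_zero] at h1
  have hτ₁A : z₁ n₁ ∈ amax L (Wfig S α ℓ) :=
    mem_amax.2 ⟨hτ₁W, fun v hv => hz₁top v (by rw [amax_zero]; exact hv)⟩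
  have hτ₂A : z₃ n₃ ∈ amax L (Wfig S α ℓ) :=
    mem_amax.2 ⟨hτ₂W, fun v hv => hz₃top v (by rw [amax_zero]; exact hv)⟩
  obtain ⟨hτ₂W', m₂, hm₂⟩ := (hz₃mem n₃ (le_refl _)).2.1
  obtain ⟨n₂, z₂, hz₂0, hz₂mem, hz₂edge, hz₂top⟩ :=
    walk_lemma (Wfig S α ℓ) L m₂ _ (z₁ n₁) (le_refl _) hτ₁A ((hz₁mem n₁ (le_refl _)).2.1)
  have hζτ₂ : z₂ n₂ = z₃ n₃ := by
    by_contra hne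
    have h1 := hz₂top (z₃ n₃) hτ₂A
    have h2 := hm₂ (z₂ n₂) (amax_subset L _ ((hz₂mem n₂ (le_refl _)).1)) hne
    linarith
  have hLpos_top : ∀ w ∈ amax L (Wfig S α ℓ), 0 < L w := by
    intro w hw
    have := (mem_amax.1 hw).2 (eta α ℓ β) hx₀W
    linarith
  have gp₁ : goodPath (Wfig S α ℓ) L n₁ z₁ := by
    refine ⟨fun i hi => ?_, hz₁edge⟩
    obtain ⟨h1, h2, h3⟩ := hz₁mem i hi
    exact ⟨h2, by linarith⟩
  have gp₂ : goodPath (Wfig S α ℓ) L n₂ z₂ := by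
    refine ⟨fun i hi => ?_, hz₂edge⟩
    obtain ⟨h1, h2, h3⟩ := hz₂mem i hi
    exact ⟨h2, hLpos_top _ h1⟩
  have gp₃ : goodPath (Wfig S α ℓ) L n₃ z₃ := by
    refine ⟨fun i hi => ?_, hz₃edge⟩
    obtain ⟨h1, h2, h3⟩ := hz₃mem i hi
    exact ⟨h2, by linarith⟩
  obtain ⟨z₃', gp₃', hz₃'0, hz₃'n⟩ := goodPath_reverse gp₃
  obtain ⟨z₁₂, gp₁₂, h120, h12n⟩ := goodPath_concat gp₁ gp₂ hz₂0.symm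
  obtain ⟨Z, gpZ, hZ0, hZn⟩ := goodPath_concat gp₁₂ gp₃'
    (by rw [h12n, hζτ₂, ← hz₃'0])
  refine ⟨n₁ + n₂ + n₃, fun i => farPt S α ℓ (Z i), ?_, ?_, ?_, ?_⟩
  · show farPt S α ℓ (Z 0) = β
    rw [hZ0, h120, hz₁0]
    exact hfarβ
  · show farPt S α ℓ (Z (n₁ + n₂ + n₃)) = γ
    rw [hZn, hz₃'n, hz₃0]
    exact hfarγ
  · intro i hi
    obtain ⟨⟨hZiW, mz, hmz⟩, hZipos⟩ := gpZ.1 i hi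
    refine ⟨vertex_to_edge hP hS hsep hαS hZiW mz hmz, ?_⟩
    obtain ⟨hsub, hmem, hcpos'⟩ := farPt_sub hsep hZiW
    have hc := congrArg L hsub
    rw [map_sub, map_smul, smul_eq_mul] at hc
    nlinarith
  · intro i hi
    exact wedge_to_face hP hS hsep hαS (gpZ.2 i hi)
end

section
/- Let (A,B) be a pair of real n×n matrices with A·Bᵗ symmetric and (A,B) of rank n, representing a Lagrangian matroid M. For each pair of bases F, G of M define s(F,G) as the sign of the principal minor of the symmetric matrix C_F on the rows and columns indexed by G ∖ F, and set s(F,G) = 0 whenever F or G is not a basis. Then (M, s) is an oriented Lagrangian matroid; in particular, for each basis F the map G ↦ s(F,G) is an orientation of M relative to F, and s(G,K) = s(F,K)·s(F,G)·(−1)^{|G∖(F∪K)|} for all bases F, G, K. -/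
open Finset Matrix
open scoped Classical

/-- The index set `J = I ∪ I*`: the element `(i, false)` represents the unstarred
index `i+1`, and `(i, true)` represents the starred index `(i+1)*`. -/
abbrev JJ (n : ℕ) := Fin n × Bool

/-- The involution `* : J → J`. -/
def starJ {n : ℕ} (x : JJ n) : JJ n := (x.1, !x.2)

/-- A subset `A ⊆ J` is admissible iff `A ∩ A* = ∅`. -/
def AdmissibleSet {n : ℕ} (A : Finset (JJ n)) : Prop := ∀ x ∈ A, starJ x ∉ A

/-- An admissible permutation of `J`: one commuting with `*`.  These form the
hyperoctahedral group `W = BC_n`. -/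
def AdmissiblePerm {n : ℕ} (w : Equiv.Perm (JJ n)) : Prop := ∀ x, w (starJ x) = starJ (w x)

/-- The standard ordering `n* < … < 1* < 1 < … < n` on `J`, encoded by a value in `ℤ`. -/
def ordJ {n : ℕ} (x : JJ n) : ℤ := if x.2 then -((x.1 : ℤ) + 1) else (x.1 : ℤ) + 1

/-- The ordering `≤^w` on `J`: `x ≤^w y` iff `w⁻¹ x ≤ w⁻¹ y` in the standard order. -/
def leW {n : ℕ} (w : Equiv.Perm (JJ n)) (x y : JJ n) : Prop :=
  ordJ (w.symm x) ≤ ordJ (w.symm y)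

/-- The (Gale) ordering induced by `≤^w` on admissible subsets: `A ≼^w B` iff the
sorted lists dominate componentwise, equivalently iff there is a bijection
`f : A → B` with `a ≤^w f a` for all `a ∈ A`. -/
def setLE {n : ℕ} (w : Equiv.Perm (JJ n)) (A B : Finset (JJ n)) : Prop :=
  ∃ f : JJ n → JJ n, Set.BijOn f ↑A ↑B ∧ ∀ a ∈ A, leW w a (f a)

/-- `ℬ` is the collection of bases of a symplectic matroid of rank `k`: all members
are admissible `k`-sets, and for every admissible permutation `w` there is a
(necessarily unique) `≤^w`-maximal member (the Maximality Property). -/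
def IsSymplecticMatroid {n : ℕ} (k : ℕ) (ℬ : Finset (Finset (JJ n))) : Prop :=
  (∀ A ∈ ℬ, AdmissibleSet A ∧ A.card = k) ∧
  ∀ w : Equiv.Perm (JJ n), AdmissiblePerm w → ∃ A ∈ ℬ, ∀ B ∈ ℬ, setLE w B A

/-- A Lagrangian matroid is a symplectic matroid of rank `n`. -/
def IsLagrangianMatroid {n : ℕ} (ℬ : Finset (Finset (JJ n))) : Prop :=
  IsSymplecticMatroid n ℬ
/-- The vector `e_j ∈ ℝ^n` for `j ∈ J`: `e_i` for unstarred `i`, `-e_i` for starred. -/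
def eVec {n : ℕ} (x : JJ n) : Fin n → ℝ :=
  fun i => if i = x.1 then (if x.2 then -1 else 1) else 0

/-- The point `e_A = Σ_{j ∈ A} e_j ∈ ℝ^n` associated to an admissible set `A`. -/
def eSet {n : ℕ} (A : Finset (JJ n)) : Fin n → ℝ := ∑ x ∈ A, eVec x

/-- The matroid polytope: the convex hull of the points `e_A`, `A ∈ ℬ`. -/
def matroidPolytope {n : ℕ} (ℬ : Finset (Finset (JJ n))) : Set (Fin n → ℝ) :=
  convexHull ℝ (eSet '' ↑ℬ)

/-- Bases `A` and `B` are joined by an edge of the matroid polytope: there is a linear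
functional taking equal maximal values at `e_A`, `e_B` and strictly smaller values at
all other vertices. -/
def IsEdge {n : ℕ} (ℬ : Finset (Finset (JJ n))) (A B : Finset (JJ n)) : Prop :=
  A ∈ ℬ ∧ B ∈ ℬ ∧ A ≠ B ∧
  ∃ L : (Fin n → ℝ) →ₗ[ℝ] ℝ, L (eSet A) = L (eSet B) ∧
    ∀ C ∈ ℬ, C ≠ A → C ≠ B → L (eSet C) < L (eSet A)

/-- The height of `A` relative to the fundamental basis `F`: `h(A) = n - |A ∩ F|`. -/
def heightF {n : ℕ} (F A : Finset (JJ n)) : ℕ := n - (A ∩ F).card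

/-- A short edge: an edge whose ends are related by a short exchange `A = B ∆ {i,i*}`. -/
def IsShortEdge {n : ℕ} (ℬ : Finset (Finset (JJ n))) (A B : Finset (JJ n)) : Prop :=
  IsEdge ℬ A B ∧ ∃ i : JJ n, symmDiff A B = ({i, starJ i} : Finset (JJ n))

/-- A long edge: an edge whose ends are related by a long exchange
`A = B ∆ {i,i*,j,j*}`, `i ∉ {j,j*}`. -/
def IsLongEdge {n : ℕ} (ℬ : Finset (Finset (JJ n))) (A B : Finset (JJ n)) : Prop :=
  IsEdge ℬ A B ∧ ∃ i j : JJ n, i ≠ j ∧ i ≠ starJ j ∧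
    symmDiff A B = ({i, starJ i, j, starJ j} : Finset (JJ n))

/-- The four bases of a 2-dimensional face of the matroid polytope which is a square
with short edges (type sSquare): `A`, `A ∆ {i,i*}`, `A ∆ {j,j*}`, `A ∆ {i,i*,j,j*}`,
all of them bases. -/
def ShortSquare {n : ℕ} (ℬ : Finset (Finset (JJ n))) (v : Fin 4 → Finset (JJ n)) : Prop :=
  ∃ (A : Finset (JJ n)) (i j : JJ n), i.1 ≠ j.1 ∧
    v 0 = A ∧ v 1 = symmDiff A ({i, starJ i} : Finset (JJ n)) ∧
    v 2 = symmDiff A ({j, starJ j} : Finset (JJ n)) ∧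
    v 3 = symmDiff A ({i, starJ i, j, starJ j} : Finset (JJ n)) ∧
    ∀ k : Fin 4, v k ∈ ℬ

/-- `sF` is an orientation of the Lagrangian matroid with bases `ℬ` relative to the
fundamental basis `F`: it takes values `±1` on bases and satisfies axioms (i)–(iv). -/
def IsOrientationRel {n : ℕ} (ℬ : Finset (Finset (JJ n))) (F : Finset (JJ n))
    (sF : Finset (JJ n) → ℤ) : Prop :=
  (∀ A ∈ ℬ, sF A = 1 ∨ sF A = -1) ∧
  (∀ A B : Finset (JJ n), IsLongEdge ℬ A B → heightF F A = heightF F B → sF A = sF B) ∧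
  (∀ A B : Finset (JJ n), IsLongEdge ℬ A B → heightF F A ≠ heightF F B → sF A = -sF B) ∧
  (∀ v : Fin 4 → Finset (JJ n), ShortSquare ℬ v →
    ∀ k : Fin 4,
      ((∀ l m : Fin 4, l ≠ k → m ≠ k → sF (v l) = sF (v m)) ∧
        ∃ l : Fin 4, l ≠ k ∧ sF (v l) ≠ sF (v k)) →
      (∀ l : Fin 4, heightF F (v l) ≤ heightF F (v k)) ∨
      (∀ l : Fin 4, heightF F (v k) ≤ heightF F (v l))) ∧
  sF F = 1

/-- `(ℬ, s)` is an oriented Lagrangian matroid: `s` vanishes when an argument is not a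
basis, each `s G` is an orientation relative to `G`, and the change-of-fundamental-basis
rule holds. -/
def IsOrientation {n : ℕ} (ℬ : Finset (Finset (JJ n)))
    (s : Finset (JJ n) → Finset (JJ n) → ℤ) : Prop :=
  (∀ G A : Finset (JJ n), G ∉ ℬ ∨ A ∉ ℬ → s G A = 0) ∧
  (∀ G ∈ ℬ, IsOrientationRel ℬ G (s G)) ∧
  (∀ G ∈ ℬ, ∀ H ∈ ℬ, ∀ A ∈ ℬ, s G A = s H A * s H G * (-1) ^ ((G \ (H ∪ A)).card))
/-- Identify `J` with the column index type of the `k × 2n` matrix `C = (A, B)`: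
unstarred indices point at columns of `A`, starred ones at columns of `B`. -/
def toCol {n : ℕ} (x : JJ n) : Fin n ⊕ Fin n := if x.2 then Sum.inr x.1 else Sum.inl x.1

/-- The `k × k` minor of `C` on the columns indexed by `X` is nonzero
(this does not depend on the chosen enumeration of `X`). -/
def MinorNonzero {k n : ℕ} {𝕂 : Type*} [Field 𝕂] (C : Matrix (Fin k) (Fin n ⊕ Fin n) 𝕂)
    (X : Finset (JJ n)) : Prop :=
  ∃ e : Fin k → JJ n, Function.Injective e ∧ Finset.univ.image e = X ∧
    (C.submatrix id fun i => toCol (e i)).det ≠ 0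

/-- `ℬ` is the collection of admissible `k`-subsets of `J` whose corresponding
`k × k` minor of `C` is nonzero. -/
def RepBases {k n : ℕ} {𝕂 : Type*} [Field 𝕂] (C : Matrix (Fin k) (Fin n ⊕ Fin n) 𝕂)
    (ℬ : Finset (Finset (JJ n))) : Prop :=
  ∀ X : Finset (JJ n), X ∈ ℬ ↔ AdmissibleSet X ∧ X.card = k ∧ MinorNonzero C X
/-- The left block after moving the columns of `F` to the right-hand side: if the
unstarred column `i` belongs to `F`, the starred column `i*` (from `B`) is swapped into
the left block and negated; otherwise the column of `A` stays. -/
def LFmat {n : ℕ} (A B : Matrix (Fin n) (Fin n) ℝ) (F : Finset (JJ n)) :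
    Matrix (Fin n) (Fin n) ℝ :=
  fun r i => if ((i, false) : JJ n) ∈ F then -(B r i) else A r i

/-- The right block after moving the columns of `F` to the right-hand side. -/
def RFmat {n : ℕ} (A B : Matrix (Fin n) (Fin n) ℝ) (F : Finset (JJ n)) :
    Matrix (Fin n) (Fin n) ℝ :=
  fun r i => if ((i, false) : JJ n) ∈ F then A r i else B r i

/-- The symmetric matrix `C_F`: reduce the right block to the identity by row
operations, i.e. multiply the left block by the inverse of the right block. -/
noncomputable def CFmat {n : ℕ} (A B : Matrix (Fin n) (Fin n) ℝ) (F : Finset (JJ n)) :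
    Matrix (Fin n) (Fin n) ℝ :=
  (RFmat A B F)⁻¹ * LFmat A B F

/-- The set of coordinates (elements of `I`) underlying a set of elements of `J`. -/
def coords {n : ℕ} (S : Finset (JJ n)) : Finset (Fin n) := S.image Prod.fst

/-- The principal minor of a square matrix on the rows and columns indexed by `K`
(the empty minor being `1`). -/
def pminor {n : ℕ} (M : Matrix (Fin n) (Fin n) ℝ) (K : Finset (Fin n)) : ℝ :=
  (M.submatrix (fun x : {a : Fin n // a ∈ K} => x.1) fun x : {a : Fin n // a ∈ K} => x.1).det

/-- The sign of a real number, as an integer. -/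
noncomputable def rsign (r : ℝ) : ℤ := if 0 < r then 1 else if r < 0 then -1 else 0

/-- The relative sign function defined by a representation `(A, B)`:
`s F G` is the sign of the principal minor of `C_F` on the rows and columns indexed by
`G ∖ F`, and `0` if `F` or `G` is not a basis. -/
noncomputable def sRep {n : ℕ} (A B : Matrix (Fin n) (Fin n) ℝ)
    (ℬ : Finset (Finset (JJ n))) (F G : Finset (JJ n)) : ℤ :=
  if F ∈ ℬ ∧ G ∈ ℬ then rsign (pminor (CFmat A B F) (coords (G \ F))) else 0

/-- The index of the quadratic form of a real square matrix: the maximal dimension of a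
subspace on which the form is negative definite (for a symmetric matrix, this is the
number of negative eigenvalues counted with multiplicity, i.e. the number of negative
coefficients when the form is written as a sum of squares). -/
noncomputable def negIndex {n : ℕ} (M : Matrix (Fin n) (Fin n) ℝ) : ℕ :=
  sSup {d : ℕ | ∃ W : Submodule ℝ (Fin n → ℝ), Module.finrank ℝ W = d ∧
    ∀ x ∈ W, x ≠ 0 → dotProduct x (M.mulVec x) < 0}

section Part1
variable {n : ℕ}

/-- canonical indicator of a full admissible set -/
def eps (X : Finset (JJ n)) : Fin n → Bool := fun i => decide ((i, true) ∈ X)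

def ofEps (ε : Fin n → Bool) : Finset (JJ n) := Finset.univ.image fun i => (i, ε i)

def Full (X : Finset (JJ n)) : Prop := ∀ i b, ((i, b) ∈ X ↔ b = eps X i)

lemma mem_ofEps (ε : Fin n → Bool) (i : Fin n) (b : Bool) :
    ((i, b) ∈ ofEps ε) ↔ b = ε i := by
  simp only [ofEps, Finset.mem_image, Finset.mem_univ, true_and, Prod.mk.injEq]
  constructor
  · rintro ⟨a, rfl, rfl⟩; rfl
  · rintro rfl; exact ⟨i, rfl, rfl⟩

lemma eps_ofEps (ε : Fin n → Bool) : eps (ofEps ε) = ε := by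
  funext i
  by_cases h : ε i = true
  · simp [eps, mem_ofEps, h]
  · simp only [Bool.not_eq_true] at h
    simp [eps, mem_ofEps, h]

lemma full_ofEps (ε : Fin n → Bool) : Full (ofEps ε) := by
  intro i b; rw [mem_ofEps, eps_ofEps]

lemma adm_ofEps (ε : Fin n → Bool) : AdmissibleSet (ofEps ε) := by
  rintro ⟨i, b⟩ hx hs
  rw [mem_ofEps] at hx
  rw [starJ] at hs
  rw [mem_ofEps] at hs
  subst hx
  simp at hs

lemma card_ofEps (ε : Fin n → Bool) : (ofEps ε).card = n := by
  rw [ofEps, Finset.card_image_of_injective _ (fun a b h => by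
    simpa [Prod.ext_iff] using (Prod.ext_iff.mp h).1), Finset.card_univ, Fintype.card_fin]

lemma full_of_adm_card {X : Finset (JJ n)} (hadm : AdmissibleSet X) (hcard : X.card = n) :
    Full X := by
  have hinj : Set.InjOn Prod.fst (↑X : Set (JJ n)) := by
    rintro ⟨i, b⟩ hx ⟨i', b'⟩ hy (h : i = i')
    subst h
    by_contra hne
    have hb : b' = !b := by
      cases b <;> cases b' <;> simp_all
    exact hadm (i, b) hx (by rw [starJ]; rw [← hb]; exact hy)
  have himg : X.image Prod.fst = Finset.univ := by
    apply Finset.eq_univ_of_card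
    rw [Finset.card_image_of_injOn hinj, hcard, Fintype.card_fin]
  have hex : ∀ i : Fin n, ∃ b, (i, b) ∈ X := by
    intro i
    have : i ∈ X.image Prod.fst := by rw [himg]; exact Finset.mem_univ i
    obtain ⟨⟨i', b⟩, hx, h⟩ := Finset.mem_image.mp this
    exact ⟨b, by cases h; exact hx⟩
  intro i b
  have hnot : ¬ ((i, true) ∈ X ∧ (i, false) ∈ X) := by
    rintro ⟨h1, h2⟩
    exact hadm (i, true) h1 h2
  cases b
  · show (i, false) ∈ X ↔ false = eps X i
    have : (false = eps X i) ↔ ¬ ((i,true) ∈ X) := by simp [eps, eq_comm]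
    rw [this]
    constructor
    · intro hf ht; exact hnot ⟨ht, hf⟩
    · intro h
      obtain ⟨b, hb⟩ := hex i
      cases b
      · exact hb
      · exact absurd hb h
  · show (i, true) ∈ X ↔ true = eps X i
    simp [eps, eq_comm]

lemma full_eq_ofEps {X : Finset (JJ n)} (h : Full X) : X = ofEps (eps X) := by
  ext ⟨i, b⟩
  rw [h i b, mem_ofEps]


lemma eps_injective_on_full {X Y : Finset (JJ n)} (hX : Full X) (hY : Full Y)
    (h : eps X = eps Y) : X = Y := by
  rw [full_eq_ofEps hX, full_eq_ofEps hY, h]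

end Part1

section Part2
variable {n : ℕ}

lemma rsign_of_pos {x : ℝ} (h : 0 < x) : rsign x = 1 := by simp [rsign, h]
lemma rsign_of_neg {x : ℝ} (h : x < 0) : rsign x = -1 := by
  simp [rsign, h, not_lt.mpr h.le]
lemma rsign_zero : rsign (0 : ℝ) = 0 := by simp [rsign]
lemma rsign_one : rsign (1 : ℝ) = 1 := rsign_of_pos one_pos
lemma rsign_neg (x : ℝ) : rsign (-x) = - rsign x := by
  rcases lt_trichotomy x 0 with h | h | h
  · rw [rsign_of_neg h, rsign_of_pos (by linarith)]; ring
  · subst h; simp [rsign_zero]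
  · rw [rsign_of_pos h, rsign_of_neg (by linarith)]

lemma rsign_mul (x y : ℝ) : rsign (x * y) = rsign x * rsign y := by
  rcases lt_trichotomy x 0 with hx | hx | hx <;>
    rcases lt_trichotomy y 0 with hy | hy | hy
  · rw [rsign_of_pos (mul_pos_of_neg_of_neg hx hy), rsign_of_neg hx, rsign_of_neg hy]; ring
  · subst hy; simp [rsign_zero]
  · rw [rsign_of_neg (mul_neg_of_neg_of_pos hx hy), rsign_of_neg hx, rsign_of_pos hy]; ring
  · subst hx; simp [rsign_zero]
  · subst hx; simp [rsign_zero]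
  · subst hx; simp [rsign_zero]
  · rw [rsign_of_neg (mul_neg_of_pos_of_neg hx hy), rsign_of_pos hx, rsign_of_neg hy]; ring
  · subst hy; simp [rsign_zero]
  · rw [rsign_of_pos (mul_pos hx hy), rsign_of_pos hx, rsign_of_pos hy]; ring

lemma rsign_inv (x : ℝ) : rsign x⁻¹ = rsign x := by
  rcases lt_trichotomy x 0 with h | h | h
  · rw [rsign_of_neg h, rsign_of_neg (inv_neg''.mpr h)]
  · subst h; simp
  · rw [rsign_of_pos h, rsign_of_pos (inv_pos.mpr h)]

lemma rsign_pm {x : ℝ} (h : x ≠ 0) : rsign x = 1 ∨ rsign x = -1 := by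
  rcases lt_trichotomy x 0 with h' | h' | h'
  · right; exact rsign_of_neg h'
  · exact absurd h' h
  · left; exact rsign_of_pos h'

lemma rsign_sq {x : ℝ} (h : x ≠ 0) : rsign x * rsign x = 1 := by
  rcases rsign_pm h with h' | h' <;> rw [h'] <;> ring

lemma rsign_eq_neg_one_iff {x : ℝ} : rsign x = -1 ↔ x < 0 := by
  constructor
  · intro h
    rcases lt_trichotomy x 0 with h' | h' | h'
    · exact h'
    · subst h'; rw [rsign_zero] at h; norm_num at h
    · rw [rsign_of_pos h'] at h; norm_num at h
  · exact rsign_of_neg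

/-- the sign `ι(F,X)` as a function of the indicators -/
def iota (f x : Fin n → Bool) : ℤ :=
  ∏ i : Fin n, (if x i ≠ f i ∧ x i = true then (-1 : ℤ) else 1)

lemma pm_mul {z w : ℤ} (hz : z = 1 ∨ z = -1) (hw : w = 1 ∨ w = -1) :
    z * w = 1 ∨ z * w = -1 := by
  rcases hz with rfl | rfl <;> rcases hw with rfl | rfl <;> norm_num

lemma iota_pm (f x : Fin n → Bool) : iota f x = 1 ∨ iota f x = -1 := by
  refine Finset.prod_induction _ (fun z => z = 1 ∨ z = -1) (fun a b => pm_mul) (Or.inl rfl) ?_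
  intro i _
  split <;> simp

lemma iota_self (f : Fin n → Bool) : iota f f = 1 := by
  unfold iota
  refine Finset.prod_eq_one fun i _ => by simp

lemma rsign_intCast {k : ℤ} (h : k = 1 ∨ k = -1) : rsign (k : ℝ) = k := by
  rcases h with rfl | rfl
  · simpa using rsign_one
  · push_cast
    rw [rsign_neg, rsign_one]

/-- a product of ±1 over a `univ`-filter equals `(-1)^card` -/
lemma prod_ite_neg_one (P : Fin n → Prop) [DecidablePred P] :
    (∏ i : Fin n, (if P i then (-1 : ℤ) else 1)) = (-1) ^ (Finset.univ.filter P).card := by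
  rw [Finset.prod_ite, Finset.prod_const, Finset.prod_const, one_pow, mul_one]

lemma pminor_empty (M : Matrix (Fin n) (Fin n) ℝ) : pminor M ∅ = 1 := by
  haveI : IsEmpty {a : Fin n // a ∈ (∅ : Finset (Fin n))} :=
    ⟨fun a => Finset.notMem_empty a.1 a.2⟩
  exact Matrix.det_isEmpty

lemma pminor_singleton (M : Matrix (Fin n) (Fin n) ℝ) (p : Fin n) :
    pminor M {p} = M p p := by
  haveI : Unique {a : Fin n // a ∈ ({p} : Finset (Fin n))} :=
    ⟨⟨⟨p, Finset.mem_singleton_self p⟩⟩, fun a => Subtype.ext (Finset.mem_singleton.mp a.2)⟩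
  rw [pminor, Matrix.det_unique]
  have hd : ((default : {a : Fin n // a ∈ ({p} : Finset (Fin n))}) : Fin n) = p :=
    Finset.mem_singleton.mp (default : {a : Fin n // a ∈ ({p} : Finset (Fin n))}).2
  rw [Matrix.submatrix_apply, hd]

lemma pminor_pair (M : Matrix (Fin n) (Fin n) ℝ) {p q : Fin n} (hpq : p ≠ q) :
    pminor M {p, q} = M p p * M q q - M q p * M p q := by
  have hp : p ∈ ({p, q} : Finset (Fin n)) := by simp
  have hq : q ∈ ({p, q} : Finset (Fin n)) := by simp
  let e : Fin 2 ≃ {a : Fin n // a ∈ ({p, q} : Finset (Fin n))} :=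
    { toFun := ![⟨p, hp⟩, ⟨q, hq⟩]
      invFun := fun a => if a.1 = p then 0 else 1
      left_inv := by
        intro k
        fin_cases k
        · simp
        · simp [hpq.symm]
      right_inv := by
        rintro ⟨a, ha⟩
        rcases Finset.mem_insert.mp ha with rfl | ha'
        · simp
        · rw [Finset.mem_singleton] at ha'
          subst ha'
          simp [Ne.symm hpq] }
  rw [pminor, ← Matrix.det_submatrix_equiv_self e, Matrix.submatrix_submatrix,
    Matrix.det_fin_two]
  show M p p * M q q - M p q * M q p = _
  ring

/-- determinant of a matrix whose columns off `K` are standard basis vectors -/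
lemma det_std_cols (M : Matrix (Fin n) (Fin n) ℝ) (K : Finset (Fin n))
    (h : ∀ i j, j ∉ K → M i j = if i = j then 1 else 0) :
    M.det = pminor M K := by
  classical
  let e : {a : Fin n // a ∈ K} ⊕ {a : Fin n // ¬ a ∈ K} ≃ Fin n := Equiv.sumCompl _
  rw [← Matrix.det_submatrix_equiv_self e]
  have : M.submatrix e e = Matrix.fromBlocks
      (M.submatrix (fun x : {a : Fin n // a ∈ K} => x.1) (fun x : {a : Fin n // a ∈ K} => x.1))
      0
      (M.submatrix (fun x : {a : Fin n // ¬ a ∈ K} => x.1) (fun x : {a : Fin n // a ∈ K} => x.1))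
      1 := by
    ext (i | i) (j | j)
    · rfl
    · exact (by
        have := h i.1 j.1 j.2
        simp only [Matrix.submatrix_apply, Matrix.fromBlocks_apply₁₂]
        rw [show (e (Sum.inl i)) = i.1 from rfl, show (e (Sum.inr j)) = j.1 from rfl, this]
        simp [Matrix.zero_apply]
        intro hij
        exact absurd (hij ▸ i.2) j.2)
    · rfl
    · have := h i.1 j.1 j.2
      simp only [Matrix.submatrix_apply, Matrix.fromBlocks_apply₂₂]
      rw [show (e (Sum.inr i)) = i.1 from rfl, show (e (Sum.inr j)) = j.1 from rfl, this]
      by_cases hij : i = j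
      · subst hij; simp
      · rw [if_neg (fun h' => hij (Subtype.ext h')), Matrix.one_apply_ne hij]
  rw [this, Matrix.det_fromBlocks_zero₁₂, Matrix.det_one, mul_one]
  rfl

end Part2

section Part3
variable {n : ℕ} (A B : Matrix (Fin n) (Fin n) ℝ)

lemma RFmat_full {X : Finset (JJ n)} (hX : Full X) :
    RFmat A B X = fun r i => if eps X i = true then B r i else A r i := by
  funext r i
  have hmem : (((i, false) : JJ n) ∈ X) ↔ (eps X i = false) := by
    rw [hX i false]; exact eq_comm
  rw [RFmat]
  by_cases h : eps X i = true
  · have hn : ¬ (((i, false) : JJ n) ∈ X) := by rw [hmem, h]; simp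
    rw [if_neg hn, h, if_pos rfl]
  · have h' : eps X i = false := by simpa using h
    rw [if_pos (hmem.mpr h'), h', if_neg (by simp)]

lemma LFmat_full {X : Finset (JJ n)} (hX : Full X) :
    LFmat A B X = fun r i => if eps X i = true then A r i else -(B r i) := by
  funext r i
  have hmem : (((i, false) : JJ n) ∈ X) ↔ (eps X i = false) := by
    rw [hX i false]; exact eq_comm
  rw [LFmat]
  by_cases h : eps X i = true
  · have hn : ¬ (((i, false) : JJ n) ∈ X) := by rw [hmem, h]; simp
    rw [if_neg hn, h, if_pos rfl]
  · have h' : eps X i = false := by simpa using h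
    rw [if_pos (hmem.mpr h'), h', if_neg (by simp)]

lemma minorNonzero_iff {X : Finset (JJ n)} (hadm : AdmissibleSet X) (hcard : X.card = n) :
    MinorNonzero (Matrix.fromCols A B) X ↔ (RFmat A B X).det ≠ 0 := by
  have hX : Full X := full_of_adm_card hadm hcard
  have hsub : ∀ (π : Fin n → Fin n),
      ((Matrix.fromCols A B).submatrix id fun k => toCol (π k, eps X (π k)))
        = (RFmat A B X).submatrix id π := by
    intro π
    funext r k
    rw [Matrix.submatrix_apply, Matrix.submatrix_apply, RFmat_full A B hX, id]
    by_cases h : eps X (π k) = true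
    · simp [toCol, h, Matrix.fromCols]
    · have h' : eps X (π k) = false := by simpa using h
      simp [toCol, h', Matrix.fromCols]
  constructor
  · rintro ⟨e, hinj, himg, hdet⟩
    have hmem : ∀ k, e k ∈ X := by
      intro k
      rw [← himg]
      exact Finset.mem_image_of_mem e (Finset.mem_univ k)
    have hek : ∀ k, e k = ((e k).1, eps X (e k).1) := by
      intro k
      have h1 := hmem k
      have : (e k).2 = eps X (e k).1 := by
        have := (hX (e k).1 (e k).2).mp (by simpa using h1)
        exact this
      exact Prod.ext rfl this
    set π : Fin n → Fin n := fun k => (e k).1 with hπ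
    have hπinj : Function.Injective π := by
      intro k l h
      apply hinj
      rw [hek k, hek l]
      simp only [hπ] at h
      rw [h]
    let σ : Equiv.Perm (Fin n) := Equiv.ofBijective π (Finite.injective_iff_bijective.mp hπinj)
    have heq : ((Matrix.fromCols A B).submatrix id fun k => toCol (e k))
        = (RFmat A B X).submatrix id ⇑σ := by
      have : (fun k => toCol (e k)) = fun k => toCol (π k, eps X (π k)) := by
        funext k; rw [hek k]
      rw [this]
      exact hsub π
    rw [heq, Matrix.det_permute'] at hdet
    intro h0
    rw [h0, mul_zero] at hdet
    exact hdet rfl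
  · intro hdet
    refine ⟨fun i => (i, eps X i), fun a b h => by simpa using (Prod.ext_iff.mp h).1, ?_, ?_⟩
    · rw [show (Finset.univ.image fun i => (i, eps X i)) = ofEps (eps X) from rfl,
        ← full_eq_ofEps hX]
    · have := hsub id
      simp only [id] at this
      rw [show ((Matrix.fromCols A B).submatrix id fun k => toCol (k, eps X k))
          = (RFmat A B X).submatrix id id from this]
      simpa using hdet

lemma LR_symm (hsym : (A * Bᵀ).IsSymm) (F : Finset (JJ n)) :
    LFmat A B F * (RFmat A B F)ᵀ = RFmat A B F * (LFmat A B F)ᵀ := by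
  ext r s
  rw [Matrix.mul_apply, Matrix.mul_apply]
  rw [← sub_eq_zero, ← Finset.sum_sub_distrib]
  have hAB : ∀ r s, (A * Bᵀ) r s = ∑ i, A r i * B s i := by
    intro r s
    rw [Matrix.mul_apply]
    exact Finset.sum_congr rfl fun i _ => by rw [Matrix.transpose_apply]
  have : ∀ i ∈ Finset.univ,
      LFmat A B F r i * (RFmat A B F)ᵀ i s - RFmat A B F r i * (LFmat A B F)ᵀ i s
        = A r i * B s i - A s i * B r i := by
    intro i _
    rw [Matrix.transpose_apply, Matrix.transpose_apply]
    unfold LFmat RFmat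
    by_cases h : ((i, false) : JJ n) ∈ F
    · simp only [h, if_pos]; ring
    · simp only [h, if_neg, if_false]; ring
  rw [Finset.sum_congr rfl this, Finset.sum_sub_distrib, ← hAB, ← hAB]
  rw [hsym.apply s r]
  exact sub_self _

lemma CF_symm (hsym : (A * Bᵀ).IsSymm) {F : Finset (JJ n)}
    (hdF : (RFmat A B F).det ≠ 0) : (CFmat A B F)ᵀ = CFmat A B F := by
  set R := RFmat A B F with hR
  set L := LFmat A B F with hL
  have hdFu : IsUnit R.det := isUnit_iff_ne_zero.mpr hdF
  have hdFtu : IsUnit Rᵀ.det := by rw [Matrix.det_transpose]; exact hdFu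
  have h1 : CFmat A B F = Lᵀ * (Rᵀ)⁻¹ := by
    calc CFmat A B F = R⁻¹ * L := rfl
      _ = R⁻¹ * ((L * Rᵀ) * (Rᵀ)⁻¹) := by
          rw [Matrix.mul_assoc L, Matrix.mul_nonsing_inv _ hdFtu, Matrix.mul_one]
      _ = R⁻¹ * ((R * Lᵀ) * (Rᵀ)⁻¹) := by rw [LR_symm A B hsym F]
      _ = (R⁻¹ * R) * (Lᵀ * (Rᵀ)⁻¹) := by simp only [← Matrix.mul_assoc]
      _ = Lᵀ * (Rᵀ)⁻¹ := by rw [Matrix.nonsing_inv_mul _ hdFu, Matrix.one_mul]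
  calc (CFmat A B F)ᵀ = (R⁻¹ * L)ᵀ := rfl
    _ = Lᵀ * (R⁻¹)ᵀ := Matrix.transpose_mul _ _
    _ = Lᵀ * (Rᵀ)⁻¹ := by rw [Matrix.transpose_nonsing_inv]
    _ = CFmat A B F := h1.symm

end Part3

section Part4
variable {n : ℕ} (A B : Matrix (Fin n) (Fin n) ℝ)

lemma coords_sdiff {X Y : Finset (JJ n)} (hX : Full X) (hY : Full Y) :
    coords (Y \ X) = Finset.univ.filter (fun i => eps Y i ≠ eps X i) := by
  ext i
  simp only [coords, Finset.mem_image, Finset.mem_sdiff, Finset.mem_filter,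
    Finset.mem_univ, true_and]
  constructor
  · rintro ⟨⟨a, b⟩, ⟨hY', hX'⟩, rfl⟩
    rw [hY a b] at hY'
    intro hc
    apply hX'
    rw [hX a b, ← hc, hY']
  · intro h
    refine ⟨(i, eps Y i), ⟨?_, ?_⟩, rfl⟩
    · rw [hY i (eps Y i)]
    · rw [hX i (eps Y i)]
      exact h

lemma key_formula {F X : Finset (JJ n)} (hF : Full F) (hX : Full X)
    (hdF : (RFmat A B F).det ≠ 0) :
    (RFmat A B X).det = (RFmat A B F).det * ((iota (eps F) (eps X) : ℤ) : ℝ)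
      * pminor (CFmat A B F) (coords (X \ F)) := by
  classical
  set fF := eps F with hfF
  set fX := eps X with hfX
  set C := CFmat A B F with hC
  set K := coords (X \ F) with hK
  have hKmem : ∀ j, j ∈ K ↔ fX j ≠ fF j := by
    intro j
    rw [hK, coords_sdiff hF hX, Finset.mem_filter]
    simp [hfX, hfF]
  set N0 : Matrix (Fin n) (Fin n) ℝ :=
    (fun r i => if fX i = fF i then (if r = i then 1 else 0) else C r i) with hN0
  set d : Fin n → ℝ := (fun i => if fX i ≠ fF i ∧ fX i = true then -1 else 1) with hd
  have hdFu : IsUnit (RFmat A B F).det := isUnit_iff_ne_zero.mpr hdF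
  have hRC : RFmat A B F * C = LFmat A B F := by
    rw [hC, CFmat, ← Matrix.mul_assoc, Matrix.mul_nonsing_inv _ hdFu, Matrix.one_mul]
  have hmain : RFmat A B X = RFmat A B F * (N0 * Matrix.diagonal d) := by
    ext r j
    rw [Matrix.mul_apply]
    have hsum : ∀ i, (N0 * Matrix.diagonal d) i j = N0 i j * d j := fun i =>
      Matrix.mul_diagonal d N0 i j
    simp only [hsum]
    by_cases h : fX j = fF j
    · have hd1 : d j = 1 := by rw [hd]; simp [h]
      have : ∀ i, RFmat A B F r i * (N0 i j * d j)
          = if i = j then RFmat A B F r i else 0 := by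
        intro i
        rw [hd1, hN0]
        simp only [h, if_true, if_pos rfl]
        by_cases hij : i = j <;> simp [hij]
      rw [Finset.sum_congr rfl fun i _ => this i, Finset.sum_ite_eq' Finset.univ j _]
      simp only [Finset.mem_univ, if_true]
      rw [RFmat_full A B hX, RFmat_full A B hF]
      simp only [← hfF, ← hfX, h]
    · have hLj : RFmat A B X r j = d j * LFmat A B F r j := by
        rw [RFmat_full A B hX, LFmat_full A B hF]
        simp only [← hfF, ← hfX]
        by_cases hf : fF j = true
        · have hx : fX j = false := by
            cases hxv : fX j
            · rfl
            · exact absurd (hxv.trans hf.symm) h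
          rw [hd]
          simp [hx, hf]
        · have hf' : fF j = false := by simpa using hf
          have hx : fX j = true := by
            cases hxv : fX j
            · exact absurd (hxv.trans hf'.symm) h
            · rfl
          rw [hd]
          simp [hx, hf']
      have : ∀ i, RFmat A B F r i * (N0 i j * d j)
          = d j * (RFmat A B F r i * C i j) := by
        intro i
        rw [hN0]
        simp only [h, if_false]
        ring
      rw [Finset.sum_congr rfl fun i _ => this i, ← Finset.mul_sum, hLj]
      congr 1
      rw [← Matrix.mul_apply, hRC]
  have hdet : (RFmat A B X).det = (RFmat A B F).det * (N0.det * ∏ i, d i) := by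
    rw [hmain, Matrix.det_mul, Matrix.det_mul, Matrix.det_diagonal]
  have hN0det : N0.det = pminor C K := by
    have hstd : ∀ i j, j ∉ K → N0 i j = if i = j then 1 else 0 := by
      intro i j hj
      rw [hN0]
      have : fX j = fF j := by
        by_contra hc
        exact hj ((hKmem j).mpr hc)
      simp [this]
    rw [det_std_cols N0 K hstd]
    unfold pminor
    congr 1
    ext i j
    have hj : fX j.1 ≠ fF j.1 := (hKmem j.1).mp j.2
    simp only [Matrix.submatrix_apply, hN0]
    show (if fX j.1 = fF j.1 then (if i.1 = j.1 then (1:ℝ) else 0) else C i.1 j.1) = C i.1 j.1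
    rw [if_neg hj]
  have hprod : (∏ i, d i) = ((iota fF fX : ℤ) : ℝ) := by
    rw [iota, Int.cast_prod]
    refine Finset.prod_congr rfl fun i _ => ?_
    rw [hd]
    by_cases hcond : fX i ≠ fF i ∧ fX i = true
    · norm_num [hcond]
    · norm_num [hcond]
  rw [hdet, hN0det, hprod]
  ring

end Part4

section Part5
variable {n : ℕ} (A B : Matrix (Fin n) (Fin n) ℝ) (ℬ : Finset (Finset (JJ n)))

lemma basis_props (hℬ : RepBases (Matrix.fromCols A B) ℬ) {X : Finset (JJ n)}
    (hXB : X ∈ ℬ) : Full X ∧ (RFmat A B X).det ≠ 0 := by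
  obtain ⟨hadm, hcard, hmin⟩ := (hℬ X).mp hXB
  exact ⟨full_of_adm_card hadm hcard, (minorNonzero_iff A B hadm hcard).mp hmin⟩

lemma not_mem_det_zero (hℬ : RepBases (Matrix.fromCols A B) ℬ) {X : Finset (JJ n)}
    (hadm : AdmissibleSet X) (hcard : X.card = n) (h : X ∉ ℬ) :
    (RFmat A B X).det = 0 := by
  by_contra hd
  exact h ((hℬ X).mpr ⟨hadm, hcard, (minorNonzero_iff A B hadm hcard).mpr hd⟩)

lemma sRep_formula (hℬ : RepBases (Matrix.fromCols A B) ℬ)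
    {F X : Finset (JJ n)} (hFB : F ∈ ℬ) (hXB : X ∈ ℬ) :
    sRep A B ℬ F X
      = iota (eps F) (eps X) * rsign ((RFmat A B F).det) * rsign ((RFmat A B X).det) := by
  obtain ⟨hF, hdF⟩ := basis_props A B ℬ hℬ hFB
  obtain ⟨hX, hdX⟩ := basis_props A B ℬ hℬ hXB
  have hkey := key_formula A B hF hX hdF
  rw [sRep, if_pos ⟨hFB, hXB⟩]
  rcases iota_pm (eps F) (eps X) with h1 | h1
  · have hp : pminor (CFmat A B F) (coords (X \ F))
        = ((RFmat A B F).det)⁻¹ * (RFmat A B X).det := by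
      rw [hkey, h1]
      push_cast
      field_simp
    rw [hp, rsign_mul, rsign_inv, h1]
    ring
  · have hp : pminor (CFmat A B F) (coords (X \ F))
        = -(((RFmat A B F).det)⁻¹ * (RFmat A B X).det) := by
      rw [hkey, h1]
      push_cast
      field_simp
    rw [hp, rsign_neg, rsign_mul, rsign_inv, h1]
    ring

lemma sRep_self (hℬ : RepBases (Matrix.fromCols A B) ℬ) {F : Finset (JJ n)}
    (hFB : F ∈ ℬ) : sRep A B ℬ F F = 1 := by
  rw [sRep, if_pos ⟨hFB, hFB⟩, Finset.sdiff_self]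
  rw [show coords (∅ : Finset (JJ n)) = ∅ from Finset.image_empty _, pminor_empty, rsign_one]

lemma sRep_pm (hℬ : RepBases (Matrix.fromCols A B) ℬ) {F X : Finset (JJ n)}
    (hFB : F ∈ ℬ) (hXB : X ∈ ℬ) : sRep A B ℬ F X = 1 ∨ sRep A B ℬ F X = -1 := by
  obtain ⟨hF, hdF⟩ := basis_props A B ℬ hℬ hFB
  obtain ⟨hX, hdX⟩ := basis_props A B ℬ hℬ hXB
  rw [sRep_formula A B ℬ hℬ hFB hXB]
  exact pm_mul (pm_mul (iota_pm _ _) (rsign_pm hdF)) (rsign_pm hdX)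

/-- product of three iotas over a flip set -/
lemma iota_triple {D : Finset (Fin n)} (f x y : Fin n → Bool)
    (h : ∀ r, y r = if r ∈ D then !(x r) else x r) :
    iota f x * iota f y * iota x y
      = ∏ r ∈ D, (if x r = f r then 1 else (-1 : ℤ)) := by
  unfold iota
  rw [← Finset.prod_mul_distrib, ← Finset.prod_mul_distrib]
  have key : ∀ r : Fin n,
      ((if x r ≠ f r ∧ x r = true then (-1 : ℤ) else 1)
        * (if y r ≠ f r ∧ y r = true then (-1 : ℤ) else 1))
        * (if y r ≠ x r ∧ y r = true then (-1 : ℤ) else 1)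
      = if r ∈ D then (if x r = f r then 1 else (-1 : ℤ)) else 1 := by
    intro r
    by_cases hr : r ∈ D
    · rw [h r, if_pos hr, if_pos hr]
      cases x r <;> cases f r <;> norm_num
    · rw [h r, if_neg hr, if_neg hr]
      cases x r <;> cases f r <;> norm_num
  rw [Finset.prod_congr rfl fun r _ => key r]
  rw [Finset.prod_ite_mem Finset.univ D _, Finset.univ_inter]

lemma iota_change (g h a : Fin n → Bool) :
    iota g a = iota h a * iota h g
      * ∏ i : Fin n, (if g i ≠ h i ∧ g i ≠ a i then (-1 : ℤ) else 1) := by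
  unfold iota
  rw [← Finset.prod_mul_distrib, ← Finset.prod_mul_distrib]
  refine Finset.prod_congr rfl fun i _ => ?_
  cases g i <;> cases h i <;> cases a i <;> norm_num

lemma card_filter_eq_image_card {G : Finset (JJ n)} (hG : Full G)
    (P : Fin n → Prop) [DecidablePred P]
    (h : ∀ i b, ((i, b) ∈ G ∧ P i) ↔ (b = eps G i ∧ P i)) : True := trivial

lemma sdiff_union_card {G H X : Finset (JJ n)} (hG : Full G) (hH : Full H) (hX : Full X) :
    (G \ (H ∪ X)).card
      = (Finset.univ.filter fun i => eps G i ≠ eps H i ∧ eps G i ≠ eps X i).card := by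
  have himg : G \ (H ∪ X)
      = (Finset.univ.filter fun i => eps G i ≠ eps H i ∧ eps G i ≠ eps X i).image
          (fun i => (i, eps G i)) := by
    ext ⟨i, b⟩
    simp only [Finset.mem_sdiff, Finset.mem_union, Finset.mem_image, Finset.mem_filter,
      Finset.mem_univ, true_and, Prod.mk.injEq]
    constructor
    · rintro ⟨hGm, hcon⟩
      have hb : b = eps G i := (hG i b).mp hGm
      subst hb
      refine ⟨i, ⟨?_, ?_⟩, rfl, rfl⟩
      · intro hc
        exact hcon (Or.inl ((hH i _).mpr hc))
      · intro hc
        exact hcon (Or.inr ((hX i _).mpr hc))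
    · rintro ⟨a, ⟨h1, h2⟩, rfl, rfl⟩
      refine ⟨(hG a _).mpr rfl, ?_⟩
      rintro (hc | hc)
      · exact h1 ((hH a _).mp hc)
      · exact h2 ((hX a _).mp hc)
  rw [himg, Finset.card_image_of_injective _ (fun a b h => (Prod.ext_iff.mp h).1)]

lemma neg_one_pow_sdiff {G H X : Finset (JJ n)} (hG : Full G) (hH : Full H) (hX : Full X) :
    ((-1 : ℤ)) ^ ((G \ (H ∪ X)).card)
      = ∏ i : Fin n, (if eps G i ≠ eps H i ∧ eps G i ≠ eps X i then (-1 : ℤ) else 1) := by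
  rw [sdiff_union_card hG hH hX, ← prod_ite_neg_one]

lemma heightF_eq {F X : Finset (JJ n)} (hF : Full F) (hX : Full X) (hcard : X.card = n) :
    heightF F X = (Finset.univ.filter fun i => eps X i ≠ eps F i).card := by
  have hinter : X ∩ F
      = (Finset.univ.filter fun i => eps X i = eps F i).image (fun i => (i, eps X i)) := by
    ext ⟨i, b⟩
    simp only [Finset.mem_inter, Finset.mem_image, Finset.mem_filter, Finset.mem_univ,
      true_and, Prod.mk.injEq]
    constructor
    · rintro ⟨h1, h2⟩
      have hb := (hX i b).mp h1
      subst hb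
      exact ⟨i, ((hF i _).mp h2), rfl, rfl⟩
    · rintro ⟨a, h1, rfl, rfl⟩
      exact ⟨(hX a _).mpr rfl, (hF a _).mpr h1⟩
  have hcEq : (X ∩ F).card = (Finset.univ.filter fun i => eps X i = eps F i).card := by
    rw [hinter, Finset.card_image_of_injective _ (fun a b h => (Prod.ext_iff.mp h).1)]
  have hsum := Finset.card_filter_add_card_filter_not
    (s := (Finset.univ : Finset (Fin n))) (p := fun i => eps X i = eps F i)
  rw [Finset.card_univ, Fintype.card_fin] at hsum
  have : (Finset.univ.filter fun i => ¬ (eps X i = eps F i)).card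
      = (Finset.univ.filter fun i => eps X i ≠ eps F i).card := rfl
  rw [heightF, hcEq]
  omega

lemma eSet_full {X : Finset (JJ n)} (hX : Full X) :
    eSet X = fun r => if eps X r = true then (-1 : ℝ) else 1 := by
  funext r
  rw [eSet]
  conv_lhs => rw [full_eq_ofEps hX]
  rw [Finset.sum_apply, ofEps, Finset.sum_image (fun a _ b _ h => (Prod.ext_iff.mp h).1)]
  have : ∀ i : Fin n, eVec (i, eps X i) r
      = if r = i then (if eps X i = true then (-1 : ℝ) else 1) else 0 := by
    intro i
    rw [eVec]
  rw [Finset.sum_congr rfl fun i _ => this i, Finset.sum_ite_eq Finset.univ r _]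
  simp

end Part5

section Part6
variable {n : ℕ}

def flipAt (ε : Fin n → Bool) (p : Fin n) : Fin n → Bool :=
  fun r => if r = p then !(ε r) else ε r

lemma mem_star_pair (i : JJ n) (b : Bool) :
    ((i.1, b) : JJ n) ∈ ({i, starJ i} : Finset (JJ n)) := by
  rcases i with ⟨p, c⟩
  simp only [Finset.mem_insert, Finset.mem_singleton, starJ, Prod.mk.injEq]
  cases b <;> cases c <;> simp

lemma not_mem_star_pair {i : JJ n} {r : Fin n} (h : r ≠ i.1) (b : Bool) :
    ((r, b) : JJ n) ∉ ({i, starJ i} : Finset (JJ n)) := by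
  simp only [Finset.mem_insert, Finset.mem_singleton, starJ]
  rintro (rfl | hc)
  · exact h rfl
  · exact h (Prod.ext_iff.mp hc).1

lemma eps_symmDiff_flip {X Y S : Finset (JJ n)} (hX : Full X) (hY : Full Y)
    (hXY : Y = symmDiff X S) {r : Fin n} (hr : ∀ b, ((r, b) : JJ n) ∈ S) :
    eps Y r = !(eps X r) := by
  have hmem : ((r, !(eps X r)) : JJ n) ∈ Y := by
    rw [hXY, Finset.mem_symmDiff]
    right
    refine ⟨hr _, ?_⟩
    intro hc
    have := (hX r _).mp hc
    simp at this
  exact ((hY r _).mp hmem).symm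

lemma eps_symmDiff_same {X Y S : Finset (JJ n)} (hX : Full X) (hY : Full Y)
    (hXY : Y = symmDiff X S) {r : Fin n} (hr : ∀ b, ((r, b) : JJ n) ∉ S) :
    eps Y r = eps X r := by
  have hmem : ((r, eps X r) : JJ n) ∈ Y := by
    rw [hXY, Finset.mem_symmDiff]
    left
    exact ⟨(hX r _).mpr rfl, hr _⟩
  exact ((hY r _).mp hmem).symm

lemma coords_flip {X W : Finset (JJ n)} {D : Finset (Fin n)} (hX : Full X) (hW : Full W)
    (hD : ∀ r, eps W r = if r ∈ D then !(eps X r) else eps X r) :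
    coords (W \ X) = D := by
  rw [coords_sdiff hX hW]
  ext r
  simp only [Finset.mem_filter, Finset.mem_univ, true_and]
  by_cases hr : r ∈ D
  · simp [hD r, hr]
  · simp [hD r, hr]

lemma height_flip {F X W : Finset (JJ n)} {D : Finset (Fin n)}
    (hF : Full F) (hX : Full X) (hW : Full W)
    (hXc : X.card = n) (hWc : W.card = n)
    (hD : ∀ r, eps W r = if r ∈ D then !(eps X r) else eps X r) :
    heightF F W + (∑ r ∈ D, if eps X r = eps F r then 0 else 1)
      = heightF F X + (∑ r ∈ D, if eps X r = eps F r then 1 else 0) := by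
  rw [heightF_eq hF hX hXc, heightF_eq hF hW hWc]
  rw [Finset.card_filter, Finset.card_filter]
  have hsplit : ∀ g : Fin n → ℕ,
      (∑ r : Fin n, g r) = (∑ r ∈ Finset.univ \ D, g r) + (∑ r ∈ D, g r) :=
    fun g => (Finset.sum_sdiff (Finset.subset_univ D)).symm
  rw [hsplit fun r => if eps W r ≠ eps F r then 1 else 0,
    hsplit fun r => if eps X r ≠ eps F r then 1 else 0]
  have hoff : (∑ r ∈ Finset.univ \ D, if eps W r ≠ eps F r then 1 else 0)
      = (∑ r ∈ Finset.univ \ D, if eps X r ≠ eps F r then 1 else 0) := by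
    refine Finset.sum_congr rfl fun r hr => ?_
    have : r ∉ D := (Finset.mem_sdiff.mp hr).2
    rw [hD r, if_neg this]
  have hon : (∑ r ∈ D, if eps W r ≠ eps F r then 1 else 0)
      = (∑ r ∈ D, if eps X r = eps F r then 1 else 0) := by
    refine Finset.sum_congr rfl fun r hr => ?_
    rw [hD r, if_pos hr]
    cases hx : eps X r <;> cases hf : eps F r <;> simp
  have hon2 : (∑ r ∈ D, if eps X r ≠ eps F r then 1 else 0)
      = (∑ r ∈ D, if eps X r = eps F r then 0 else 1) := by
    refine Finset.sum_congr rfl fun r hr => ?_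
    cases hx : eps X r <;> cases hf : eps F r <;> simp
  rw [hoff, hon, hon2]
  omega

end Part6

section Part7
variable {n : ℕ} (A B : Matrix (Fin n) (Fin n) ℝ) (ℬ : Finset (Finset (JJ n)))

/-- the fundamental triple-product identity -/
lemma triple_product (hℬ : RepBases (Matrix.fromCols A B) ℬ)
    {F X W : Finset (JJ n)} (hFB : F ∈ ℬ) (hXB : X ∈ ℬ) (hWB : W ∈ ℬ)
    {D : Finset (Fin n)}
    (hD : ∀ r, eps W r = if r ∈ D then !(eps X r) else eps X r) :
    sRep A B ℬ F W * sRep A B ℬ F X * sRep A B ℬ X W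
      = ∏ r ∈ D, (if eps X r = eps F r then 1 else (-1 : ℤ)) := by
  obtain ⟨hF, hdF⟩ := basis_props A B ℬ hℬ hFB
  obtain ⟨hX, hdX⟩ := basis_props A B ℬ hℬ hXB
  obtain ⟨hW, hdW⟩ := basis_props A B ℬ hℬ hWB
  rw [sRep_formula A B ℬ hℬ hFB hWB, sRep_formula A B ℬ hℬ hFB hXB,
    sRep_formula A B ℬ hℬ hXB hWB, ← iota_triple (eps F) (eps X) (eps W) hD]
  rcases rsign_pm hdF with h1 | h1 <;> rcases rsign_pm hdX with h2 | h2 <;>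
    rcases rsign_pm hdW with h3 | h3 <;> rw [h1, h2, h3] <;> ring

lemma pm_solve {s t e a : ℤ} (hs : s = 1 ∨ s = -1) (ht : t = 1 ∨ t = -1)
    (he : e = 1 ∨ e = -1) (ha : a = 1 ∨ a = -1) (h : t * s * e = a) :
    (t = s ↔ e = a) := by
  rcases hs with rfl | rfl <;> rcases ht with rfl | rfl <;> rcases he with rfl | rfl <;>
    rcases ha with rfl | rfl <;> omega

lemma pm_ne {z w : ℤ} (hz : z = 1 ∨ z = -1) (hw : w = 1 ∨ w = -1) :
    (z ≠ w) ↔ z = -w := by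
  rcases hz with rfl | rfl <;> rcases hw with rfl | rfl <;> omega

/-- Jacobi-type inequality for a symmetric matrix -/
lemma jac {C : Matrix (Fin n) (Fin n) ℝ} (hC : Cᵀ = C) {p q : Fin n}
    (h : rsign (C p p) * rsign (C q q) = -1) :
    rsign (C p p * C q q - C q p * C p q) = -1 := by
  have hsym : C q p = C p q := by
    conv_lhs => rw [← hC, Matrix.transpose_apply]
  apply rsign_of_neg
  have hlt : C p p * C q q < 0 := by
    rw [← rsign_mul] at h
    exact rsign_eq_neg_one_iff.mp h
  rw [hsym]
  nlinarith [sq_nonneg (C p q)]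

end Part7

section Part8
variable {n : ℕ} (A B : Matrix (Fin n) (Fin n) ℝ) (ℬ : Finset (Finset (JJ n)))

lemma pm_mul_eq_one {z w : ℤ} (hz : z = 1 ∨ z = -1) (hw : w = 1 ∨ w = -1)
    (h : z * w = 1) : z = w := by
  rcases hz with rfl | rfl <;> rcases hw with rfl | rfl <;> omega

lemma pm_mul_eq_neg_one {z w : ℤ} (hz : z = 1 ∨ z = -1) (hw : w = 1 ∨ w = -1)
    (h : z * w = -1) : z = -w := by
  rcases hz with rfl | rfl <;> rcases hw with rfl | rfl <;> omega

lemma star_four_mem {i j : JJ n} (x : JJ n) :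
    x ∈ ({i, starJ i, j, starJ j} : Finset (JJ n))
      ↔ (x ∈ ({i, starJ i} : Finset (JJ n)) ∨ x ∈ ({j, starJ j} : Finset (JJ n))) := by
  simp only [Finset.mem_insert, Finset.mem_singleton]
  tauto

lemma longEdge_eps {X Y : Finset (JJ n)} (hX : Full X) (hY : Full Y)
    {i j : JJ n} (hij : i ≠ j) (hijs : i ≠ starJ j)
    (hsd : symmDiff X Y = ({i, starJ i, j, starJ j} : Finset (JJ n))) :
    i.1 ≠ j.1 ∧
    (∀ r, eps Y r = if r ∈ ({i.1, j.1} : Finset (Fin n)) then !(eps X r) else eps X r) := by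
  have hpq : i.1 ≠ j.1 := by
    rcases i with ⟨p, a⟩; rcases j with ⟨q, b⟩
    intro h
    dsimp at h
    subst h
    by_cases hab : a = b
    · exact hij (by rw [hab])
    · apply hijs
      simp only [starJ, Prod.mk.injEq]
      cases a <;> cases b <;> simp_all
  have hY' : Y = symmDiff X ({i, starJ i, j, starJ j} : Finset (JJ n)) := by
    rw [← hsd, symmDiff_symmDiff_cancel_left]
  refine ⟨hpq, fun r => ?_⟩
  by_cases hrp : r = i.1
  · subst hrp
    rw [if_pos (by simp)]
    exact eps_symmDiff_flip hX hY hY' fun b =>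
      (star_four_mem _).mpr (Or.inl (mem_star_pair i b))
  · by_cases hrq : r = j.1
    · subst hrq
      rw [if_pos (by simp)]
      exact eps_symmDiff_flip hX hY hY' fun b =>
        (star_four_mem _).mpr (Or.inr (mem_star_pair j b))
    · rw [if_neg (by simp [hrp, hrq])]
      refine eps_symmDiff_same hX hY hY' fun b hb => ?_
      rcases (star_four_mem _).mp hb with hc | hc
      · exact not_mem_star_pair hrp b hc
      · exact not_mem_star_pair hrq b hc

lemma not_both_flip {X Y : Finset (JJ n)} (hedge : IsEdge ℬ X Y)
    (hX : Full X) (hY : Full Y) {p q : Fin n} (hpq : p ≠ q)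
    (hYe : ∀ r, eps Y r = if r ∈ ({p, q} : Finset (Fin n)) then !(eps X r) else eps X r) :
    ofEps (flipAt (eps X) p) ∉ ℬ ∨ ofEps (flipAt (eps X) q) ∉ ℬ := by
  by_contra hc
  push_neg at hc
  obtain ⟨h1, h2⟩ := hc
  obtain ⟨hXB, hYB, hneq, L, hLeq, hLlt⟩ := hedge
  set H1 := ofEps (flipAt (eps X) p) with hH1
  set H2 := ofEps (flipAt (eps X) q) with hH2
  have hH1f : Full H1 := full_ofEps _
  have hH2f : Full H2 := full_ofEps _
  have he1 : eps H1 = flipAt (eps X) p := eps_ofEps _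
  have he2 : eps H2 = flipAt (eps X) q := eps_ofEps _
  have hne1 : H1 ≠ X := by
    have : eps H1 p ≠ eps X p := by rw [he1]; simp [flipAt]
    exact fun h => this (by rw [h])
  have hne2 : H1 ≠ Y := by
    have : eps H1 q ≠ eps Y q := by
      rw [he1, hYe q, if_pos (by simp), flipAt, if_neg (Ne.symm hpq)]
      simp
    exact fun h => this (by rw [h])
  have hne3 : H2 ≠ X := by
    have : eps H2 q ≠ eps X q := by rw [he2]; simp [flipAt]
    exact fun h => this (by rw [h])
  have hne4 : H2 ≠ Y := by
    have : eps H2 p ≠ eps Y p := by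
      rw [he2, hYe p, if_pos (by simp), flipAt, if_neg hpq]
      simp
    exact fun h => this (by rw [h])
  have hsum : eSet H1 + eSet H2 = eSet X + eSet Y := by
    funext r
    simp only [Pi.add_apply]
    rw [eSet_full hH1f, eSet_full hH2f, eSet_full hX, eSet_full hY, he1, he2]
    simp only [flipAt, hYe r, Finset.mem_insert, Finset.mem_singleton]
    by_cases hrp : r = p
    · subst hrp
      rcases Bool.eq_false_or_eq_true (eps X r) with hxb | hxb <;> simp [hpq, hxb] <;> ring
    · by_cases hrq : r = q
      · subst hrq
        rcases Bool.eq_false_or_eq_true (eps X r) with hxb | hxb <;> simp [hrp, hxb] <;> ring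
      · simp [hrp, hrq]
  have hL1 := hLlt H1 h1 hne1 hne2
  have hL2 := hLlt H2 h2 hne3 hne4
  have hadd : L (eSet H1) + L (eSet H2) = L (eSet X) + L (eSet Y) := by
    rw [← map_add, ← map_add, hsum]
  rw [← hLeq] at hadd
  linarith

lemma longEdge_main (hℬ : RepBases (Matrix.fromCols A B) ℬ)
    (hsym : (A * Bᵀ).IsSymm) {F X Y : Finset (JJ n)} (hFB : F ∈ ℬ)
    (h : IsLongEdge ℬ X Y) :
    (heightF F X = heightF F Y → sRep A B ℬ F X = sRep A B ℬ F Y) ∧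
    (heightF F X ≠ heightF F Y → sRep A B ℬ F X = -(sRep A B ℬ F Y)) := by
  obtain ⟨hedge, i, j, hij, hijs, hsd⟩ := h
  have hXB := hedge.1
  have hYB := hedge.2.1
  obtain ⟨hF, hdF⟩ := basis_props A B ℬ hℬ hFB
  obtain ⟨hX, hdX⟩ := basis_props A B ℬ hℬ hXB
  obtain ⟨hY, hdY⟩ := basis_props A B ℬ hℬ hYB
  obtain ⟨_, hXc, _⟩ := (hℬ X).mp hXB
  obtain ⟨_, hYc, _⟩ := (hℬ Y).mp hYB
  obtain ⟨_, hFc, _⟩ := (hℬ F).mp hFB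
  obtain ⟨hpq, hYe⟩ := longEdge_eps hX hY hij hijs hsd
  set p := i.1
  set q := j.1
  set C := CFmat A B X with hCdef
  have hCsym : Cᵀ = C := CF_symm A B hsym hdX
  -- one of the diagonal entries vanishes
  have hdiag : C p p = 0 ∨ C q q = 0 := by
    have key : ∀ r : Fin n, ofEps (flipAt (eps X) r) ∉ ℬ → C r r = 0 := by
      intro r hout
      set H := ofEps (flipAt (eps X) r) with hH
      have hHf : Full H := full_ofEps _
      have hdH : (RFmat A B H).det = 0 :=
        not_mem_det_zero A B ℬ hℬ (adm_ofEps _) (card_ofEps _) hout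
      have hco : coords (H \ X) = {r} := by
        refine coords_flip hX hHf fun s => ?_
        rw [eps_ofEps, flipAt]
        by_cases hs : s = r
        · subst hs; simp
        · simp [hs]
      have hkey := key_formula A B hX hHf hdX
      rw [hdH, hco, pminor_singleton] at hkey
      rcases iota_pm (eps X) (eps H) with hι | hι <;> rw [hι] at hkey <;>
        [skip; skip] <;>
      · push_cast at hkey
        rcases mul_eq_zero.mp hkey.symm with h0 | h0
        · rcases mul_eq_zero.mp h0 with h0' | h0'
          · exact absurd h0' hdX
          · norm_num at h0'
        · exact h0
    rcases not_both_flip ℬ hedge hX hY hpq hYe with h1 | h1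
    · exact Or.inl (key p h1)
    · exact Or.inr (key q h1)
  -- the principal 2x2 minor is negative
  have hco2 : coords (Y \ X) = {p, q} := coords_flip hX hY hYe
  have hpm_ne : pminor C {p, q} ≠ 0 := by
    have hkey := key_formula A B hX hY hdX
    rw [hco2] at hkey
    intro h0
    rw [h0, mul_zero] at hkey
    exact hdY hkey
  have hCqp : C q p = C p q := by
    conv_lhs => rw [← hCsym, Matrix.transpose_apply]
  have hpm_neg : pminor C {p, q} < 0 := by
    rw [pminor_pair C hpq] at hpm_ne ⊢
    rw [hCqp] at hpm_ne ⊢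
    rcases hdiag with h0 | h0 <;> rw [h0] at hpm_ne ⊢ <;>
    · have hne' : C p q ≠ 0 := by
        intro hc
        rw [hc] at hpm_ne
        norm_num at hpm_ne
      have hpos := mul_self_pos.mpr hne'
      nlinarith
  have hXY : sRep A B ℬ X Y = -1 := by
    rw [sRep, if_pos ⟨hXB, hYB⟩, hco2]
    exact rsign_of_neg hpm_neg
  -- triple product
  have hT := triple_product A B ℬ hℬ hFB hXB hYB (D := {p, q}) hYe
  rw [hXY, Finset.prod_pair hpq] at hT
  have hsFX := sRep_pm A B ℬ hℬ hFB hXB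
  have hsFY := sRep_pm A B ℬ hℬ hFB hYB
  -- heights
  have hH := height_flip hF hX hY hXc hYc (D := {p, q}) hYe
  rw [Finset.sum_pair hpq, Finset.sum_pair hpq] at hH
  by_cases hap : eps X p = eps F p <;> by_cases haq : eps X q = eps F q <;>
      simp only [hap, haq, if_true, if_false] at hT hH
  · refine ⟨fun he => absurd he (by omega), fun _ => ?_⟩
    have hprod : sRep A B ℬ F Y * sRep A B ℬ F X = -1 := by linarith
    have := pm_mul_eq_neg_one hsFY hsFX hprod
    omega
  · refine ⟨fun _ => ?_, fun hne => absurd (by omega) hne⟩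
    have hprod : sRep A B ℬ F Y * sRep A B ℬ F X = 1 := by linarith
    exact (pm_mul_eq_one hsFY hsFX hprod).symm
  · refine ⟨fun _ => ?_, fun hne => absurd (by omega) hne⟩
    have hprod : sRep A B ℬ F Y * sRep A B ℬ F X = 1 := by linarith
    exact (pm_mul_eq_one hsFY hsFX hprod).symm
  · refine ⟨fun he => absurd he (by omega), fun _ => ?_⟩
    have hprod : sRep A B ℬ F Y * sRep A B ℬ F X = -1 := by linarith
    have := pm_mul_eq_neg_one hsFY hsFX hprod
    omega

end Part8

section Part9
variable {n : ℕ} (A B : Matrix (Fin n) (Fin n) ℝ) (ℬ : Finset (Finset (JJ n)))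

lemma pm_extract {s t e : ℤ} (c : ℤ) (hs : s = 1 ∨ s = -1) (ht : t = 1 ∨ t = -1)
    (he : e = 1 ∨ e = -1) (h : t * s * e = c) : (t = s → e = c) ∧ (t ≠ s → e = -c) := by
  rcases hs with rfl | rfl <;> rcases ht with rfl | rfl <;> rcases he with rfl | rfl <;>
    constructor <;> intro h' <;> omega

lemma fin4_all (P : Fin 4 → Prop) (p0 : P 0) (p1 : P 1) (p2 : P 2) (p3 : P 3) :
    ∀ l, P l := by
  intro l
  fin_cases l
  · exact p0
  · exact p1
  · exact p2
  · exact p3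

lemma square_main (hℬ : RepBases (Matrix.fromCols A B) ℬ)
    (hsym : (A * Bᵀ).IsSymm) {F : Finset (JJ n)} (hFB : F ∈ ℬ)
    (v : Fin 4 → Finset (JJ n)) (hv : ShortSquare ℬ v) (k : Fin 4)
    (hyp1 : ∀ l m : Fin 4, l ≠ k → m ≠ k → sRep A B ℬ F (v l) = sRep A B ℬ F (v m))
    (hyp2 : ∃ l : Fin 4, l ≠ k ∧ sRep A B ℬ F (v l) ≠ sRep A B ℬ F (v k)) :
    (∀ l, heightF F (v l) ≤ heightF F (v k)) ∨
    (∀ l, heightF F (v k) ≤ heightF F (v l)) := by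
  obtain ⟨X, i, j, hpq, h0, h1, h2, h3, hmem⟩ := hv
  subst h0
  set p := i.1 with hp
  set q := j.1 with hq
  obtain ⟨hFf, hdF⟩ := basis_props A B ℬ hℬ hFB
  obtain ⟨hXf, hdX⟩ := basis_props A B ℬ hℬ (hmem 0)
  obtain ⟨h1f, hd1⟩ := basis_props A B ℬ hℬ (hmem 1)
  obtain ⟨h2f, hd2⟩ := basis_props A B ℬ hℬ (hmem 2)
  obtain ⟨h3f, hd3⟩ := basis_props A B ℬ hℬ (hmem 3)
  obtain ⟨_, hFc, _⟩ := (hℬ F).mp hFB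
  obtain ⟨_, hXc, _⟩ := (hℬ (v 0)).mp (hmem 0)
  obtain ⟨_, h1c, _⟩ := (hℬ (v 1)).mp (hmem 1)
  obtain ⟨_, h2c, _⟩ := (hℬ (v 2)).mp (hmem 2)
  obtain ⟨_, h3c, _⟩ := (hℬ (v 3)).mp (hmem 3)
  have he1 : ∀ r, eps (v 1) r
      = if r ∈ ({p} : Finset (Fin n)) then !(eps (v 0) r) else eps (v 0) r := by
    intro r
    by_cases hrp : r = p
    · subst hrp
      rw [if_pos (Finset.mem_singleton_self _)]
      exact eps_symmDiff_flip hXf h1f h1 fun b => mem_star_pair i b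
    · rw [if_neg (by simp [hrp])]
      exact eps_symmDiff_same hXf h1f h1 fun b => not_mem_star_pair hrp b
  have he2 : ∀ r, eps (v 2) r
      = if r ∈ ({q} : Finset (Fin n)) then !(eps (v 0) r) else eps (v 0) r := by
    intro r
    by_cases hrq : r = q
    · subst hrq
      rw [if_pos (Finset.mem_singleton_self _)]
      exact eps_symmDiff_flip hXf h2f h2 fun b => mem_star_pair j b
    · rw [if_neg (by simp [hrq])]
      exact eps_symmDiff_same hXf h2f h2 fun b => not_mem_star_pair hrq b
  have he3 : ∀ r, eps (v 3) r
      = if r ∈ ({p, q} : Finset (Fin n)) then !(eps (v 0) r) else eps (v 0) r := by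
    intro r
    by_cases hrp : r = p
    · subst hrp
      rw [if_pos (by simp)]
      exact eps_symmDiff_flip hXf h3f h3 fun b =>
        (star_four_mem _).mpr (Or.inl (mem_star_pair i b))
    · by_cases hrq : r = q
      · subst hrq
        rw [if_pos (by simp)]
        exact eps_symmDiff_flip hXf h3f h3 fun b =>
          (star_four_mem _).mpr (Or.inr (mem_star_pair j b))
      · rw [if_neg (by simp [hrp, hrq])]
        refine eps_symmDiff_same hXf h3f h3 fun b hb => ?_
        rcases (star_four_mem _).mp hb with hc | hc
        · exact not_mem_star_pair hrp b hc
        · exact not_mem_star_pair hrq b hc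
  have hCsym : (CFmat A B (v 0))ᵀ = CFmat A B (v 0) := CF_symm A B hsym hdX
  have hsX1 : sRep A B ℬ (v 0) (v 1) = rsign (CFmat A B (v 0) p p) := by
    rw [sRep, if_pos ⟨hmem 0, hmem 1⟩, coords_flip hXf h1f he1, pminor_singleton]
  have hsX2 : sRep A B ℬ (v 0) (v 2) = rsign (CFmat A B (v 0) q q) := by
    rw [sRep, if_pos ⟨hmem 0, hmem 2⟩, coords_flip hXf h2f he2, pminor_singleton]
  have hsX3 : sRep A B ℬ (v 0) (v 3)
      = rsign (CFmat A B (v 0) p p * CFmat A B (v 0) q q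
          - CFmat A B (v 0) q p * CFmat A B (v 0) p q) := by
    rw [sRep, if_pos ⟨hmem 0, hmem 3⟩, coords_flip hXf h3f he3, pminor_pair _ hpq]
  have hjac : sRep A B ℬ (v 0) (v 1) * sRep A B ℬ (v 0) (v 2) = -1 →
      sRep A B ℬ (v 0) (v 3) = -1 := by
    intro h
    rw [hsX1, hsX2] at h
    rw [hsX3]
    exact jac hCsym h
  have T1 := triple_product A B ℬ hℬ hFB (hmem 0) (hmem 1) he1
  have T2 := triple_product A B ℬ hℬ hFB (hmem 0) (hmem 2) he2
  have T3 := triple_product A B ℬ hℬ hFB (hmem 0) (hmem 3) he3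
  rw [Finset.prod_singleton] at T1 T2
  rw [Finset.prod_pair hpq] at T3
  have R1 := height_flip hFf hXf h1f hXc h1c he1
  have R2 := height_flip hFf hXf h2f hXc h2c he2
  have R3 := height_flip hFf hXf h3f hXc h3c he3
  rw [Finset.sum_singleton, Finset.sum_singleton] at R1 R2
  rw [Finset.sum_pair hpq, Finset.sum_pair hpq] at R3
  have hs0 := sRep_pm A B ℬ hℬ hFB (hmem 0)
  have hs1 := sRep_pm A B ℬ hℬ hFB (hmem 1)
  have hs2 := sRep_pm A B ℬ hℬ hFB (hmem 2)
  have hs3 := sRep_pm A B ℬ hℬ hFB (hmem 3)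
  have hepm1 := sRep_pm A B ℬ hℬ (hmem 0) (hmem 1)
  have hepm2 := sRep_pm A B ℬ hℬ (hmem 0) (hmem 2)
  have hepm3 := sRep_pm A B ℬ hℬ (hmem 0) (hmem 3)
  have hk : k = 0 ∨ k = 1 ∨ k = 2 ∨ k = 3 := by
    fin_cases k <;> simp
  clear hsX1 hsX2 hsX3 hCsym
  rcases hk with hk | hk | hk | hk
  · -- k = 0
    subst hk
    have h12 := hyp1 1 2 (by decide) (by decide)
    have h13 := hyp1 1 3 (by decide) (by decide)
    obtain ⟨l, hlk, hlne⟩ := hyp2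
    have B1 : sRep A B ℬ F (v 1) ≠ sRep A B ℬ F (v 0) := by
      fin_cases l
      · exact absurd rfl hlk
      · exact hlne
      · exact fun h => hlne (h12.symm.trans h)
      · exact fun h => hlne (h13.symm.trans h)
    have B2 : sRep A B ℬ F (v 2) ≠ sRep A B ℬ F (v 0) := fun h => B1 (h12.trans h)
    have B3 : sRep A B ℬ F (v 3) ≠ sRep A B ℬ F (v 0) := fun h => B1 (h13.trans h)
    by_cases hap : eps (v 0) p = eps F p <;> by_cases haq : eps (v 0) q = eps F q
    · -- hap True haq True
      simp only [if_pos hap, if_pos haq] at T1 T2 T3 R1 R2 R3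
      right
      refine fin4_all _ ?_ ?_ ?_ ?_ <;> omega
    · -- hap True haq False
      simp only [if_pos hap, if_neg haq] at T1 T2 T3 R1 R2 R3
      exfalso
      have E1 := (pm_extract (1 : ℤ) hs0 hs1 hepm1 T1).2 B1
      have E2 := (pm_extract (-1 : ℤ) hs0 hs2 hepm2 T2).2 B2
      have E3 := (pm_extract ((1 * -1) : ℤ) hs0 hs3 hepm3 T3).2 B3
      have hprod : sRep A B ℬ (v 0) (v 1) * sRep A B ℬ (v 0) (v 2) = -1 := by
        rw [E1, E2]; norm_num
      have := hjac hprod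
      omega
    · -- hap False haq True
      simp only [if_neg hap, if_pos haq] at T1 T2 T3 R1 R2 R3
      exfalso
      have E1 := (pm_extract (-1 : ℤ) hs0 hs1 hepm1 T1).2 B1
      have E2 := (pm_extract (1 : ℤ) hs0 hs2 hepm2 T2).2 B2
      have E3 := (pm_extract ((-1 * 1) : ℤ) hs0 hs3 hepm3 T3).2 B3
      have hprod : sRep A B ℬ (v 0) (v 1) * sRep A B ℬ (v 0) (v 2) = -1 := by
        rw [E1, E2]; norm_num
      have := hjac hprod
      omega
    · -- hap False haq False
      simp only [if_neg hap, if_neg haq] at T1 T2 T3 R1 R2 R3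
      left
      refine fin4_all _ ?_ ?_ ?_ ?_ <;> omega
  · -- k = 1
    subst hk
    have B2 : sRep A B ℬ F (v 2) = sRep A B ℬ F (v 0) := hyp1 2 0 (by decide) (by decide)
    have B3 : sRep A B ℬ F (v 3) = sRep A B ℬ F (v 0) := hyp1 3 0 (by decide) (by decide)
    obtain ⟨l, hlk, hlne⟩ := hyp2
    have B1 : sRep A B ℬ F (v 1) ≠ sRep A B ℬ F (v 0) := by
      fin_cases l
      · exact fun h => hlne h.symm
      · exact absurd rfl hlk
      · exact fun h => hlne (B2.trans h.symm)
      · exact fun h => hlne (B3.trans h.symm)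
    by_cases hap : eps (v 0) p = eps F p <;> by_cases haq : eps (v 0) q = eps F q
    · -- hap True haq True
      simp only [if_pos hap, if_pos haq] at T1 T2 T3 R1 R2 R3
      exfalso
      have E1 := (pm_extract (1 : ℤ) hs0 hs1 hepm1 T1).2 B1
      have E2 := (pm_extract (1 : ℤ) hs0 hs2 hepm2 T2).1 B2
      have E3 := (pm_extract ((1 * 1) : ℤ) hs0 hs3 hepm3 T3).1 B3
      have hprod : sRep A B ℬ (v 0) (v 1) * sRep A B ℬ (v 0) (v 2) = -1 := by
        rw [E1, E2]; norm_num
      have := hjac hprod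
      omega
    · -- hap True haq False
      simp only [if_pos hap, if_neg haq] at T1 T2 T3 R1 R2 R3
      left
      refine fin4_all _ ?_ ?_ ?_ ?_ <;> omega
    · -- hap False haq True
      simp only [if_neg hap, if_pos haq] at T1 T2 T3 R1 R2 R3
      right
      refine fin4_all _ ?_ ?_ ?_ ?_ <;> omega
    · -- hap False haq False
      simp only [if_neg hap, if_neg haq] at T1 T2 T3 R1 R2 R3
      exfalso
      have E1 := (pm_extract (-1 : ℤ) hs0 hs1 hepm1 T1).2 B1
      have E2 := (pm_extract (-1 : ℤ) hs0 hs2 hepm2 T2).1 B2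
      have E3 := (pm_extract ((-1 * -1) : ℤ) hs0 hs3 hepm3 T3).1 B3
      have hprod : sRep A B ℬ (v 0) (v 1) * sRep A B ℬ (v 0) (v 2) = -1 := by
        rw [E1, E2]; norm_num
      have := hjac hprod
      omega
  · -- k = 2
    subst hk
    have B1 : sRep A B ℬ F (v 1) = sRep A B ℬ F (v 0) := hyp1 1 0 (by decide) (by decide)
    have B3 : sRep A B ℬ F (v 3) = sRep A B ℬ F (v 0) := hyp1 3 0 (by decide) (by decide)
    obtain ⟨l, hlk, hlne⟩ := hyp2
    have B2 : sRep A B ℬ F (v 2) ≠ sRep A B ℬ F (v 0) := by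
      fin_cases l
      · exact fun h => hlne h.symm
      · exact fun h => hlne (B1.trans h.symm)
      · exact absurd rfl hlk
      · exact fun h => hlne (B3.trans h.symm)
    by_cases hap : eps (v 0) p = eps F p <;> by_cases haq : eps (v 0) q = eps F q
    · -- hap True haq True
      simp only [if_pos hap, if_pos haq] at T1 T2 T3 R1 R2 R3
      exfalso
      have E1 := (pm_extract (1 : ℤ) hs0 hs1 hepm1 T1).1 B1
      have E2 := (pm_extract (1 : ℤ) hs0 hs2 hepm2 T2).2 B2
      have E3 := (pm_extract ((1 * 1) : ℤ) hs0 hs3 hepm3 T3).1 B3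
      have hprod : sRep A B ℬ (v 0) (v 1) * sRep A B ℬ (v 0) (v 2) = -1 := by
        rw [E1, E2]; norm_num
      have := hjac hprod
      omega
    · -- hap True haq False
      simp only [if_pos hap, if_neg haq] at T1 T2 T3 R1 R2 R3
      right
      refine fin4_all _ ?_ ?_ ?_ ?_ <;> omega
    · -- hap False haq True
      simp only [if_neg hap, if_pos haq] at T1 T2 T3 R1 R2 R3
      left
      refine fin4_all _ ?_ ?_ ?_ ?_ <;> omega
    · -- hap False haq False
      simp only [if_neg hap, if_neg haq] at T1 T2 T3 R1 R2 R3
      exfalso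
      have E1 := (pm_extract (-1 : ℤ) hs0 hs1 hepm1 T1).1 B1
      have E2 := (pm_extract (-1 : ℤ) hs0 hs2 hepm2 T2).2 B2
      have E3 := (pm_extract ((-1 * -1) : ℤ) hs0 hs3 hepm3 T3).1 B3
      have hprod : sRep A B ℬ (v 0) (v 1) * sRep A B ℬ (v 0) (v 2) = -1 := by
        rw [E1, E2]; norm_num
      have := hjac hprod
      omega
  · -- k = 3
    subst hk
    have B1 : sRep A B ℬ F (v 1) = sRep A B ℬ F (v 0) := hyp1 1 0 (by decide) (by decide)
    have B2 : sRep A B ℬ F (v 2) = sRep A B ℬ F (v 0) := hyp1 2 0 (by decide) (by decide)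
    obtain ⟨l, hlk, hlne⟩ := hyp2
    have B3 : sRep A B ℬ F (v 3) ≠ sRep A B ℬ F (v 0) := by
      fin_cases l
      · exact fun h => hlne h.symm
      · exact fun h => hlne (B1.trans h.symm)
      · exact fun h => hlne (B2.trans h.symm)
      · exact absurd rfl hlk
    by_cases hap : eps (v 0) p = eps F p <;> by_cases haq : eps (v 0) q = eps F q
    · -- hap True haq True
      simp only [if_pos hap, if_pos haq] at T1 T2 T3 R1 R2 R3
      left
      refine fin4_all _ ?_ ?_ ?_ ?_ <;> omega
    · -- hap True haq False
      simp only [if_pos hap, if_neg haq] at T1 T2 T3 R1 R2 R3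
      exfalso
      have E1 := (pm_extract (1 : ℤ) hs0 hs1 hepm1 T1).1 B1
      have E2 := (pm_extract (-1 : ℤ) hs0 hs2 hepm2 T2).1 B2
      have E3 := (pm_extract ((1 * -1) : ℤ) hs0 hs3 hepm3 T3).2 B3
      have hprod : sRep A B ℬ (v 0) (v 1) * sRep A B ℬ (v 0) (v 2) = -1 := by
        rw [E1, E2]; norm_num
      have := hjac hprod
      omega
    · -- hap False haq True
      simp only [if_neg hap, if_pos haq] at T1 T2 T3 R1 R2 R3
      exfalso
      have E1 := (pm_extract (-1 : ℤ) hs0 hs1 hepm1 T1).1 B1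
      have E2 := (pm_extract (1 : ℤ) hs0 hs2 hepm2 T2).1 B2
      have E3 := (pm_extract ((-1 * 1) : ℤ) hs0 hs3 hepm3 T3).2 B3
      have hprod : sRep A B ℬ (v 0) (v 1) * sRep A B ℬ (v 0) (v 2) = -1 := by
        rw [E1, E2]; norm_num
      have := hjac hprod
      omega
    · -- hap False haq False
      simp only [if_neg hap, if_neg haq] at T1 T2 T3 R1 R2 R3
      right
      refine fin4_all _ ?_ ?_ ?_ ?_ <;> omega

end Part9


/-- A real representation `(A, B)` of a Lagrangian matroid `M`
(so `A·Bᵀ` is symmetric and `(A, B)` has rank `n`) defines an orientation of `M`: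
setting `s(F,G)` to be the sign of the principal minor of the symmetric matrix `C_F` on
the rows and columns indexed by `G ∖ F` (and `0` when `F` or `G` is not a basis) makes
`(M, s)` an oriented Lagrangian matroid.  In particular each `G ↦ s(F,G)` is an
orientation relative to `F` and the change-of-basis rule
`s(G,K) = s(F,K)·s(F,G)·(−1)^{|G∖(F∪K)|}` holds. -/
theorem representation_defines_orientation {n : ℕ}
    (A B : Matrix (Fin n) (Fin n) ℝ)
    (hsym : (A * Bᵀ).IsSymm)
    (hrank : (Matrix.fromCols A B).rank = n)
    (ℬ : Finset (Finset (JJ n)))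
    (hℬ : RepBases (Matrix.fromCols A B) ℬ) :
    IsOrientation ℬ (sRep A B ℬ) := by
  refine ⟨?_, ?_, ?_⟩
  · intro G A' h
    rw [sRep, if_neg (by tauto)]
  · intro G hG
    refine ⟨?_, ?_, ?_, ?_, ?_⟩
    · intro X hX
      exact sRep_pm A B ℬ hℬ hG hX
    · intro X Y hLE hh
      exact (longEdge_main A B ℬ hℬ hsym hG hLE).1 hh
    · intro X Y hLE hh
      exact (longEdge_main A B ℬ hℬ hsym hG hLE).2 hh
    · intro v hv k hk
      exact square_main A B ℬ hℬ hsym hG v hv k hk.1 hk.2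
    · exact sRep_self A B ℬ hℬ hG
  · intro G hGB H hHB K hKB
    obtain ⟨hGf, hdG⟩ := basis_props A B ℬ hℬ hGB
    obtain ⟨hHf, hdH⟩ := basis_props A B ℬ hℬ hHB
    obtain ⟨hKf, hdK⟩ := basis_props A B ℬ hℬ hKB
    rw [sRep_formula A B ℬ hℬ hGB hKB, sRep_formula A B ℬ hℬ hHB hKB,
      sRep_formula A B ℬ hℬ hHB hGB, neg_one_pow_sdiff hGf hHf hKf,
      iota_change (eps G) (eps H) (eps K)]
    rcases rsign_pm hdH with h | h <;> rw [h] <;> ring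
end

section
/- Let F, K, L ⊆ J be admissible n-subsets, each containing exactly one of i, i* for every i ∈ I, with K △ L = {i, i*, j, j*} for some i, j ∈ J with i ∉ {j, j*}. If |K ∩ F| = |L ∩ F|, then |F ∖ (K ∪ L)| and |F ∖ K| have opposite parities. If instead |K ∩ F| and |L ∩ F| differ by 2, then |F ∖ (K ∪ L)| and |F ∖ K| have the same parity. -/
open Finset Matrix
open scoped Classical
lemma starJ_starJ {n : ℕ} (x : JJ n) : starJ (starJ x) = x := by
  simp [starJ]

lemma mem_or_star {n : ℕ} {F : Finset (JJ n)} (hA : AdmissibleSet F)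
    (hc : F.card = n) (x : JJ n) : x ∈ F ∨ starJ x ∈ F := by
  classical
  have hinj : Set.InjOn Prod.fst (F : Set (JJ n)) := by
    intro a ha b hb hab
    by_contra hne
    have h2 : b = starJ a := by
      have : a.2 ≠ b.2 := fun h => hne (Prod.ext hab h)
      cases a; cases b
      simp only [starJ, Prod.mk.injEq] at *
      constructor
      · exact hab.symm
      · revert this; rename_i b1 b2; cases b1 <;> cases b2 <;> simp
    exact hA a ha (h2 ▸ hb)
  have himg : (F.image Prod.fst).card = n := by
    rw [Finset.card_image_of_injOn hinj, hc]
  have huniv : F.image Prod.fst = Finset.univ := by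
    apply Finset.eq_univ_of_card
    simpa using himg
  have : x.1 ∈ F.image Prod.fst := huniv ▸ Finset.mem_univ _
  obtain ⟨y, hy, hyx⟩ := Finset.mem_image.mp this
  rcases Bool.eq_or_eq_not y.2 x.2 with h | h
  · left; have : y = x := Prod.ext hyx h; exact this ▸ hy
  · right; have : y = starJ x := Prod.ext hyx h; exact this ▸ hy

lemma inter_pair_card {n : ℕ} {F : Finset (JJ n)} (hA : AdmissibleSet F)
    (hc : F.card = n) (x : JJ n) : (F ∩ {x, starJ x}).card = 1 := by
  classical
  rcases mem_or_star hA hc x with h | h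
  · have hx' : starJ x ∉ F := hA x h
    have : F ∩ {x, starJ x} = {x} := by
      ext y
      simp only [Finset.mem_inter, Finset.mem_insert, Finset.mem_singleton]
      constructor
      · rintro ⟨hyF, rfl | rfl⟩
        · rfl
        · exact absurd hyF hx'
      · rintro rfl; exact ⟨h, Or.inl rfl⟩
    rw [this]; simp
  · have hx' : x ∉ F := by
      intro hx; exact hA x hx h
    have : F ∩ {x, starJ x} = {starJ x} := by
      ext y
      simp only [Finset.mem_inter, Finset.mem_insert, Finset.mem_singleton]
      constructor
      · rintro ⟨hyF, rfl | rfl⟩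
        · exact absurd hyF hx'
        · rfl
      · rintro rfl; exact ⟨h, Or.inr rfl⟩
    rw [this]; simp


/-- Let `F, K, L` be admissible `n`-subsets of `J` (each containing
exactly one of `i, i*` for every `i`), with `K ∆ L = {i, i*, j, j*}`, `i ∉ {j, j*}`.
If `|K ∩ F| = |L ∩ F|` then `|F ∖ (K ∪ L)|` and `|F ∖ K|` have opposite parities; if
`|K ∩ F|` and `|L ∩ F|` differ by `2` they have the same parity. -/
theorem parity_of_complement_along_long_exchange {n : ℕ}
    (F K L : Finset (JJ n))
    (hF : AdmissibleSet F ∧ F.card = n)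
    (hK : AdmissibleSet K ∧ K.card = n)
    (hL : AdmissibleSet L ∧ L.card = n)
    (i j : JJ n) (hij : i ≠ j) (hij' : i ≠ starJ j)
    (hKL : symmDiff K L = ({i, starJ i, j, starJ j} : Finset (JJ n))) :
    ((K ∩ F).card = (L ∩ F).card →
      (F \ (K ∪ L)).card % 2 ≠ (F \ K).card % 2) ∧
    (((K ∩ F).card = (L ∩ F).card + 2 ∨ (L ∩ F).card = (K ∩ F).card + 2) →
      (F \ (K ∪ L)).card % 2 = (F \ K).card % 2) := by
  classical
  obtain ⟨hFa, hFc⟩ := hF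
  -- fst of i and j differ
  have hfst : i.1 ≠ j.1 := by
    intro h
    rcases Bool.eq_or_eq_not i.2 j.2 with h2 | h2
    · exact hij (Prod.ext h h2)
    · exact hij' (Prod.ext h h2)
  -- the four-element set splits into two pairs
  have hsplit : ({i, starJ i, j, starJ j} : Finset (JJ n))
      = ({i, starJ i} : Finset (JJ n)) ∪ {j, starJ j} := by
    ext y; simp only [Finset.mem_insert, Finset.mem_union, Finset.mem_singleton]
    tauto
  have hdisj : Disjoint (F ∩ ({i, starJ i} : Finset (JJ n))) (F ∩ {j, starJ j}) := by
    rw [Finset.disjoint_left]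
    intro a ha hb
    simp only [Finset.mem_inter, Finset.mem_insert, Finset.mem_singleton] at ha hb
    apply hfst
    rcases ha.2 with rfl | rfl <;> rcases hb.2 with h | h <;>
      simp_all [starJ, Prod.ext_iff]
  have hcard4 : (F ∩ ({i, starJ i, j, starJ j} : Finset (JJ n))).card = 2 := by
    rw [hsplit, Finset.inter_union_distrib_left, Finset.card_union_of_disjoint hdisj,
      inter_pair_card hFa hFc, inter_pair_card hFa hFc]
  -- symmetric difference decomposition
  have hsd : symmDiff K L = (K \ L) ∪ (L \ K) := by
    rw [symmDiff_def]; rfl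
  have hsdisj : Disjoint (F ∩ (K \ L)) (F ∩ (L \ K)) :=
    Finset.disjoint_of_subset_left Finset.inter_subset_right
      (Finset.disjoint_of_subset_right Finset.inter_subset_right
        (disjoint_sdiff_sdiff))
  have e1 : (F ∩ (K \ L)).card + (F ∩ (L \ K)).card = 2 := by
    rw [← Finset.card_union_of_disjoint hsdisj, ← Finset.inter_union_distrib_left,
      ← hsd, hKL]
    exact hcard4
  -- two expressions for |F ∩ (K ∪ L)|
  have eKL1 : F ∩ (K ∪ L) = (F ∩ K) ∪ (F ∩ (L \ K)) := by
    rw [← Finset.inter_union_distrib_left, Finset.union_sdiff_self_eq_union]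
  have eKL2 : F ∩ (K ∪ L) = (F ∩ L) ∪ (F ∩ (K \ L)) := by
    rw [← Finset.inter_union_distrib_left, Finset.union_sdiff_self_eq_union,
      Finset.union_comm L K]
  have d1 : Disjoint (F ∩ K) (F ∩ (L \ K)) :=
    Finset.disjoint_of_subset_left Finset.inter_subset_right
      (Finset.disjoint_of_subset_right Finset.inter_subset_right disjoint_sdiff)
  have d2 : Disjoint (F ∩ L) (F ∩ (K \ L)) :=
    Finset.disjoint_of_subset_left Finset.inter_subset_right
      (Finset.disjoint_of_subset_right Finset.inter_subset_right disjoint_sdiff)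
  have e2 : (F ∩ K).card + (F ∩ (L \ K)).card = (F ∩ L).card + (F ∩ (K \ L)).card := by
    rw [← Finset.card_union_of_disjoint d1, ← Finset.card_union_of_disjoint d2,
      ← eKL1, ← eKL2]
  have e3 : (F \ (K ∪ L)).card + ((F ∩ K).card + (F ∩ (L \ K)).card) = n := by
    rw [← Finset.card_union_of_disjoint d1, ← eKL1,
      Finset.card_sdiff_add_card_inter, hFc]
  have e4 : (F \ K).card + (F ∩ K).card = n := by
    rw [Finset.card_sdiff_add_card_inter, hFc]
  have e5 : (K ∩ F).card = (F ∩ K).card := by rw [Finset.inter_comm]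
  have e6 : (L ∩ F).card = (F ∩ L).card := by rw [Finset.inter_comm]
  constructor
  · intro h; omega
  · intro h; omega
end
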